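/- arXiv:2511.02385 — 10 statements merged into one kernel-verified Lean document; each statement's English description precedes it below -/
import Mathlib

section
/- Let R : X×X → I be a compact association scheme. If R is commutative then the Bose–Mesner algebra 𝔄_R is commutative (A ∘ B = B ∘ A for all A, B ∈ 𝔄_R), and if R is symmetric then 𝔄_R is symmetric (A^⊤ = A for all A ∈ 𝔄_R). -/
open MeasureTheory Topology Filter

noncomputable section

variable {X : Type*} {I : Type*}

/-- The matrix product `(A ∘ B)(x,z) = ∫ A(x,y) B(y,z) dμ(y)`. -/
def matProd [MeasurableSpace X] (μ : Measure X) (A B : X × X → ℂ) :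
    X × X → ℂ :=
  fun p => ∫ y, A (p.1, y) * B (y, p.2) ∂μ

/-- A compact association scheme: a quotient map `R : X × X → I` onto a compact
Hausdorff space satisfying (CAS1), (CAS2) and (CAS3). -/
def IsCompactAS [TopologicalSpace X] [TopologicalSpace I] [MeasurableSpace X]
    (μ : Measure X) (R : X × X → I) : Prop :=
  CompactSpace I ∧ T2Space I ∧ Topology.IsQuotientMap R ∧
    (∃ i₀ : I, R ⁻¹' {i₀} = {p : X × X | p.1 = p.2}) ∧
    (∀ W W' : Set I, MeasurableSet[borel I] W → MeasurableSet[borel I] W' →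
      ∀ k : I, ∃ p : NNReal, ∀ x z : X, R (x, z) = k →
        μ {y : X | R (x, y) ∈ W ∧ R (y, z) ∈ W'} = (p : ENNReal)) ∧
    (∀ i : I, ∃ iT : I, R ⁻¹' {iT} = Prod.swap ⁻¹' (R ⁻¹' {i}))

/-- Commutativity of a compact association scheme:
`p_{W,W'}^k = p_{W',W}^k` for all Borel `W, W'` and all `k`. -/
def CASComm [TopologicalSpace I] [MeasurableSpace X]
    (μ : Measure X) (R : X × X → I) : Prop :=
  ∀ W W' : Set I, MeasurableSet[borel I] W → MeasurableSet[borel I] W' →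
    ∀ x z x' z' : X, R (x, z) = R (x', z') →
      μ {y : X | R (x, y) ∈ W ∧ R (y, z) ∈ W'} =
        μ {y : X | R (x', y) ∈ W' ∧ R (y, z') ∈ W}

/-- Symmetry of a compact association scheme: `i⊤ = i` for all `i`,
i.e. every fiber of `R` is invariant under `Prod.swap`. -/
def CASSymm (R : X × X → I) : Prop :=
  ∀ i : I, R ⁻¹' {i} = Prod.swap ⁻¹' (R ⁻¹' {i})

/-- The algebra `𝔄_R = {f ∘ R : f ∈ C(I, ℂ)}`. -/
def ARset [TopologicalSpace X] [TopologicalSpace I] (R : X × X → I) :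
    Set C(X × X, ℂ) :=
  {F | ∃ f : C(I, ℂ), ∀ p : X × X, F p = f (R p)}

universe w

/-- `S` admits an approximate identity (a net) for the matrix product. -/
def HasApproxIdIn [TopologicalSpace X] [MeasurableSpace X] (μ : Measure X)
    (S : Set C(X × X, ℂ)) : Prop :=
  ∃ (ι : Type w) (l : Filter ι), l.NeBot ∧ ∃ E : ι → C(X × X, ℂ),
    (∀ n, E n ∈ S) ∧ ∀ A : C(X × X, ℂ),
      TendstoUniformly (fun n => matProd μ ⇑(E n) ⇑A) ⇑A l ∧
      TendstoUniformly (fun n => matProd μ ⇑A ⇑(E n)) ⇑A l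

/-- A Bose--Mesner algebra: a unital C*-subalgebra of `(C(X × X, ℂ), •, conj, ‖·‖∞)`
(i.e. a closed star-subalgebra for the pointwise (Hadamard) operations) satisfying
(BMA1a), (BMA1b), (BMA2), (BMA3). -/
structure IsBMA [TopologicalSpace X] [MeasurableSpace X] (μ : Measure X)
    (S : Set C(X × X, ℂ)) : Prop where
  isSubalg : ∃ 𝔄 : StarSubalgebra ℂ C(X × X, ℂ), (𝔄 : Set C(X × X, ℂ)) = S
  isClosed : IsClosed S
  approxId : HasApproxIdIn.{w} μ S
  constJ : ∀ A ∈ S, ∃ c : ℂ, ∀ p : X × X, matProd μ ⇑A (fun _ => (1 : ℂ)) p = c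
  mulClosed : ∀ A ∈ S, ∀ B ∈ S, ∃ C ∈ S, ∀ p : X × X, matProd μ ⇑A ⇑B p = C p
  transpClosed : ∀ A ∈ S, ∃ B ∈ S, ∀ p : X × X, B p = A p.swap

/-- Commutativity of a Bose--Mesner algebra (for the matrix product). -/
def BMAComm [TopologicalSpace X] [MeasurableSpace X] (μ : Measure X)
    (S : Set C(X × X, ℂ)) : Prop :=
  ∀ A ∈ S, ∀ B ∈ S, matProd μ ⇑A ⇑B = matProd μ ⇑B ⇑A

/-- Symmetry of a Bose--Mesner algebra: `A⊤ = A` for all `A ∈ S`. -/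
def BMASymm [TopologicalSpace X] (S : Set C(X × X, ℂ)) : Prop :=
  ∀ A ∈ S, ∀ p : X × X, A p.swap = A p

/-!
An element of `𝔄_R` is `f ∘ R`, so `(A ∘ B)(x, z) = ∫ f (R (x, y)) g (R (y, z)) dμ(y)` is an
integral against the joint law of the pair `y ↦ (R (x, y), R (y, z))`. Commutativity of the
scheme says that this law, evaluated on Borel rectangles `W ×ˢ W'`, is that of the swapped pair
`y ↦ (R (y, z), R (x, y))`; two finite measures on a product agreeing on rectangles are equal,
so the two integrals coincide, which is `A ∘ B = B ∘ A`. Symmetry of the scheme means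
`R (y, x) = R (x, y)`, so every `f ∘ R` is symmetric.
-/

section JointLaw

variable {Ω α β : Type*} [MeasurableSpace Ω] [MeasurableSpace α] [MeasurableSpace β]
  {μ : Measure Ω} [IsFiniteMeasure μ] {u u' : Ω → α} {v v' : Ω → β}

theorem MeasureTheory.Measure.map_prodMk_eq_of_measure_preimage_inter_eq
    (hu : Measurable u) (hv : Measurable v) (hu' : Measurable u') (hv' : Measurable v')
    (h : ∀ s t, MeasurableSet s → MeasurableSet t →
      μ (u ⁻¹' s ∩ v ⁻¹' t) = μ (u' ⁻¹' s ∩ v' ⁻¹' t)) :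
    μ.map (fun ω => (u ω, v ω)) = μ.map (fun ω => (u' ω, v' ω)) := by
  refine Measure.ext_prod fun {s t} hs ht => ?_
  rw [Measure.map_apply (hu.prodMk hv) (hs.prod ht),
    Measure.map_apply (hu'.prodMk hv') (hs.prod ht)]
  exact h s t hs ht

theorem MeasureTheory.integral_comp_prodMk_eq_of_measure_preimage_inter_eq
    {E : Type*} [NormedAddCommGroup E] [NormedSpace ℝ E] {φ : α × β → E}
    (hφ : StronglyMeasurable φ)
    (hu : Measurable u) (hv : Measurable v) (hu' : Measurable u') (hv' : Measurable v')
    (h : ∀ s t, MeasurableSet s → MeasurableSet t →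
      μ (u ⁻¹' s ∩ v ⁻¹' t) = μ (u' ⁻¹' s ∩ v' ⁻¹' t)) :
    ∫ ω, φ (u ω, v ω) ∂μ = ∫ ω, φ (u' ω, v' ω) ∂μ := by
  rw [← integral_map (hu.prodMk hv).aemeasurable hφ.aestronglyMeasurable,
    ← integral_map (hu'.prodMk hv').aemeasurable hφ.aestronglyMeasurable,
    Measure.map_prodMk_eq_of_measure_preimage_inter_eq hu hv hu' hv' h]

end JointLaw

theorem CASSymm.apply_swap {R : X × X → I} (hs : CASSymm R) (p : X × X) : R p.swap = R p :=
  (Set.ext_iff.mp (hs (R p)) p).mp rfl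

section BoseMesner

variable [TopologicalSpace X] [TopologicalSpace I] {R : X × X → I}

theorem exists_coe_eq_comp_of_mem_ARset {F : C(X × X, ℂ)} (hF : F ∈ ARset R) :
    ∃ f : C(I, ℂ), ⇑F = f ∘ R :=
  let ⟨f, hf⟩ := hF
  ⟨f, funext hf⟩

theorem CASComm.matProd_comp_comm [MeasurableSpace X] [OpensMeasurableSpace X]
    [MeasurableSpace I] [BorelSpace I] {μ : Measure X} [IsFiniteMeasure μ]
    (hc : CASComm μ R) (hR : Continuous R) {f g : I → ℂ} (hf : Measurable f)
    (hg : Measurable g) :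
    matProd μ (f ∘ R) (g ∘ R) = matProd μ (g ∘ R) (f ∘ R) := by
  funext ⟨x, z⟩
  have hleft : Measurable fun y => R (x, y) := (hR.comp (Continuous.prodMk_right x)).measurable
  have hright : Measurable fun y => R (y, z) := (hR.comp (Continuous.prodMk_left z)).measurable
  have hswap : ∫ y, f (R (x, y)) * g (R (y, z)) ∂μ = ∫ y, f (R (y, z)) * g (R (x, y)) ∂μ :=
    integral_comp_prodMk_eq_of_measure_preimage_inter_eq
      ((hf.comp measurable_fst).mul (hg.comp measurable_snd)).stronglyMeasurable
      hleft hright hright hleft fun s t hs ht => by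
        rw [BorelSpace.measurable_eq (α := I)] at hs ht
        rw [Set.inter_comm ((fun y => R (y, z)) ⁻¹' s)]
        exact hc s t hs ht x z x z rfl
  simpa only [matProd, Function.comp_apply, mul_comm (g _)] using hswap

theorem CASComm.bmaComm [MeasurableSpace X] [OpensMeasurableSpace X] {μ : Measure X}
    [IsFiniteMeasure μ] (hc : CASComm μ R) (hR : Continuous R) : BMAComm μ (ARset R) := by
  borelize I
  intro A hA B hB
  obtain ⟨f, hf⟩ := exists_coe_eq_comp_of_mem_ARset hA
  obtain ⟨g, hg⟩ := exists_coe_eq_comp_of_mem_ARset hB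
  rw [hf, hg]
  exact hc.matProd_comp_comm hR f.continuous.measurable g.continuous.measurable

theorem CASSymm.bmaSymm (hs : CASSymm R) : BMASymm (ARset R) := by
  intro A hA p
  obtain ⟨f, hf⟩ := exists_coe_eq_comp_of_mem_ARset hA
  simp only [hf, Function.comp_apply, hs.apply_swap]

end BoseMesner

theorem stmt3_general [TopologicalSpace X]
    [MeasurableSpace X] [BorelSpace X]
    (μ : Measure X) [IsFiniteMeasure μ]
    [TopologicalSpace I]
    (R : X × X → I) (hR : IsCompactAS μ R) :
    (CASComm μ R → BMAComm μ (ARset R)) ∧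
      (CASSymm R → BMASymm (ARset R)) := by
  obtain ⟨-, -, hquot, -⟩ := hR
  exact ⟨fun hc => hc.bmaComm hquot.continuous, CASSymm.bmaSymm⟩

theorem stmt3 [TopologicalSpace X] [CompactSpace X] [T2Space X] [Nonempty X]
    [MeasurableSpace X] [BorelSpace X]
    (μ : Measure X) [IsFiniteMeasure μ] [μ.Regular] [μ.IsOpenPosMeasure]
    [TopologicalSpace I]
    (R : X × X → I) (hR : IsCompactAS μ R) :
    (CASComm μ R → BMAComm μ (ARset R)) ∧
      (CASSymm R → BMASymm (ARset R)) :=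
  stmt3_general μ R hR
end
end

section
/- Let R : X×X → I be a compact association scheme. For all f, g ∈ C(I,ℂ), the function (x,z) ↦ ∫_X f(R(x,y))·g(R(y,z)) dμ_X(y) is constant on every fiber R⁻¹(k) (k ∈ I); consequently (f∘R) ∘ (g∘R) ∈ 𝔄_R, i.e., 𝔄_R is closed under the matrix product. -/
open MeasureTheory Topology Filter

noncomputable section

variable {X : Type*} {I : Type*}

/-!
The measure `μ` pushed forward along `y ↦ (R (x, y), R (y, z))` is a finite measure on `I × I`
whose values on Borel rectangles `W ×ˢ W'` are the intersection numbers `p_{W,W'}^k` with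
`k = R (x, z)`. Finite measures on a product are determined by rectangles, so this pushforward
depends only on `R (x, z)`, and so does its integral `∫ f (R (x, y)) g (R (y, z)) dμ(y)` of
`(i, j) ↦ f i * g j`. The matrix product of continuous kernels on a compact space is continuous,
so it descends along the quotient map `R` to a continuous function on `I`.
-/

namespace ContinuousMap

variable {E : Type*} [TopologicalSpace X] [CompactSpace X] [MeasurableSpace X] [BorelSpace X]
  [NormedAddCommGroup E] [NormedSpace ℝ E] [SecondCountableTopologyEither X E]

theorem continuous_integral (μ : Measure X) [IsFiniteMeasure μ] :
    Continuous fun F : C(X, E) => ∫ x, F x ∂μ := by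
  have h : (fun F : C(X, E) => ∫ x, F x ∂μ) =
      (fun F : X →₁[μ] E => ∫ x, F x ∂μ) ∘ toLp 1 μ ℝ := by
    funext F
    exact (integral_congr_ae (coeFn_toLp μ F)).symm
  rw [h]
  exact MeasureTheory.continuous_integral.comp (toLp 1 μ ℝ).continuous

end ContinuousMap

theorem continuous_matProd [TopologicalSpace X] [CompactSpace X] [MeasurableSpace X]
    [BorelSpace X] (μ : Measure X) [IsFiniteMeasure μ] {A B : X × X → ℂ}
    (hA : Continuous A) (hB : Continuous B) : Continuous (matProd μ A B) := by
  let kernel : C((X × X) × X, ℂ) := ⟨fun q => A (q.1.1, q.2) * B (q.2, q.1.2), by fun_prop⟩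
  exact (ContinuousMap.continuous_integral μ).comp kernel.curry.continuous

theorem Topology.IsQuotientMap.exists_continuousMap_apply_eq {Y Z : Type*} [TopologicalSpace X]
    [TopologicalSpace Y] [TopologicalSpace Z] {π : X → Y} (hπ : IsQuotientMap π) {F : X → Z}
    (hF : Continuous F) (hFπ : Function.FactorsThrough F π) :
    ∃ h : C(Y, Z), ∀ p, F p = h (π p) := by
  let π' : C(X, Y) := ⟨π, hπ.continuous⟩
  exact ⟨hπ.lift (f := π') ⟨F, hF⟩ hFπ,
    fun p => (DFunLike.congr_fun (hπ.lift_comp (f := π') ⟨F, hF⟩ hFπ) p).symm⟩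

theorem IsCompactAS.isQuotientMap [TopologicalSpace X] [TopologicalSpace I] [MeasurableSpace X]
    {μ : Measure X} {R : X × X → I} (hR : IsCompactAS μ R) : IsQuotientMap R :=
  hR.2.2.1

section Scheme

variable [TopologicalSpace X] [MeasurableSpace X] [OpensMeasurableSpace X]
  [TopologicalSpace I] [MeasurableSpace I] [BorelSpace I] {μ : Measure X} {R : X × X → I}

theorem measurable_pair_of_continuous (hR : Continuous R) (x z : X) :
    Measurable fun y => (R (x, y), R (y, z)) :=
  (hR.comp (Continuous.prodMk_right x)).measurable.prodMk
    (hR.comp (Continuous.prodMk_left z)).measurable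

theorem IsCompactAS.map_pair_eq [IsFiniteMeasure μ] (hR : IsCompactAS μ R) {x z x' z' : X}
    (h : R (x, z) = R (x', z')) :
    μ.map (fun y => (R (x, y), R (y, z))) = μ.map (fun y => (R (x', y), R (y, z'))) := by
  have hRc := hR.isQuotientMap.continuous
  refine Measure.ext_prod fun {W W'} hW hW' => ?_
  rw [Measure.map_apply (measurable_pair_of_continuous hRc x z) (hW.prod hW'),
    Measure.map_apply (measurable_pair_of_continuous hRc x' z') (hW.prod hW')]
  obtain ⟨p, hp⟩ := hR.2.2.2.2.1 W W' (by rwa [← BorelSpace.measurable_eq])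
    (by rwa [← BorelSpace.measurable_eq]) (R (x, z))
  exact (hp x z rfl).trans (hp x' z' h.symm).symm

theorem matProd_comp_eq_integral_map (hR : Continuous R) (f g : C(I, ℂ)) (x z : X) :
    matProd μ (fun q => f (R q)) (fun q => g (R q)) (x, z) =
      ∫ p, f p.1 * g p.2 ∂μ.map fun y => (R (x, y), R (y, z)) := by
  rw [integral_map (measurable_pair_of_continuous hR x z).aemeasurable (by fun_prop)]
  rfl

theorem IsCompactAS.matProd_eq_of_eq [IsFiniteMeasure μ] (hR : IsCompactAS μ R)
    (f g : C(I, ℂ)) {x z x' z' : X} (h : R (x, z) = R (x', z')) :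
    matProd μ (fun q => f (R q)) (fun q => g (R q)) (x, z) =
      matProd μ (fun q => f (R q)) (fun q => g (R q)) (x', z') := by
  have hRc := hR.isQuotientMap.continuous
  rw [matProd_comp_eq_integral_map hRc, matProd_comp_eq_integral_map hRc, hR.map_pair_eq h]

end Scheme

theorem stmt4_general [TopologicalSpace X] [CompactSpace X]
    [MeasurableSpace X] [BorelSpace X]
    (μ : Measure X) [IsFiniteMeasure μ]
    [TopologicalSpace I]
    (R : X × X → I) (hR : IsCompactAS μ R) (f g : C(I, ℂ)) :
    (∀ x z x' z' : X, R (x, z) = R (x', z') →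
      matProd μ (fun q => f (R q)) (fun q => g (R q)) (x, z) =
        matProd μ (fun q => f (R q)) (fun q => g (R q)) (x', z')) ∧
    ∃ h : C(I, ℂ), ∀ p : X × X,
      matProd μ (fun q => f (R q)) (fun q => g (R q)) p = h (R p) := by
  borelize I
  have hRc := hR.isQuotientMap.continuous
  have hconst : ∀ x z x' z' : X, R (x, z) = R (x', z') →
      matProd μ (fun q => f (R q)) (fun q => g (R q)) (x, z) =
        matProd μ (fun q => f (R q)) (fun q => g (R q)) (x', z') :=
    fun _ _ _ _ h => hR.matProd_eq_of_eq f g h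
  refine ⟨hconst, hR.isQuotientMap.exists_continuousMap_apply_eq ?_ ?_⟩
  · exact continuous_matProd μ (by fun_prop) (by fun_prop)
  · exact fun p q h => hconst p.1 p.2 q.1 q.2 h

theorem stmt4 [TopologicalSpace X] [CompactSpace X] [T2Space X] [Nonempty X]
    [MeasurableSpace X] [BorelSpace X]
    (μ : Measure X) [IsFiniteMeasure μ] [μ.Regular] [μ.IsOpenPosMeasure]
    [TopologicalSpace I]
    (R : X × X → I) (hR : IsCompactAS μ R) (f g : C(I, ℂ)) :
    (∀ x z x' z' : X, R (x, z) = R (x', z') →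
      matProd μ (fun q => f (R q)) (fun q => g (R q)) (x, z) =
        matProd μ (fun q => f (R q)) (fun q => g (R q)) (x', z')) ∧
    ∃ h : C(I, ℂ), ∀ p : X × X,
      matProd μ (fun q => f (R q)) (fun q => g (R q)) p = h (R p) :=
  stmt4_general μ R hR f g
end
end

section
/- Let 𝔄 be a Bose–Mesner algebra. Then the diagonal evaluation character is independent of the base point: A(x,x) = A(x',x') for every A ∈ 𝔄 and all x, x' ∈ X. -/
open MeasureTheory Topology Filter

noncomputable section

variable {X : Type*} {I : Type*}

universe w

/-! For `A, E` in a Bose–Mesner algebra, `(A ∘ E)(z, z) = ∫ A(z, y) E(y, z) dy` is the value at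
`(z, z)` of `(A • Eᵀ) ∘ J`, which lies in `ℂ · J` by (BMA1b), so it does not depend on `z`.
Letting `E` run through an approximate identity, `(A ∘ E)(z, z) → A(z, z)`. -/

theorem matProd_apply_diag [MeasurableSpace X] (μ : Measure X) (A E : X × X → ℂ) (z : X) :
    matProd μ A E (z, z) = matProd μ (fun p => A p * E p.swap) (fun _ => 1) (z, z) := by
  simp only [matProd, Prod.swap_prod_mk, mul_one]

theorem IsBMA.matProd_apply_diag_eq [TopologicalSpace X] [MeasurableSpace X] {μ : Measure X}
    {S : Set C(X × X, ℂ)} (hS : IsBMA μ S) {A E : C(X × X, ℂ)} (hA : A ∈ S) (hE : E ∈ S)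
    (x x' : X) : matProd μ A E (x, x) = matProd μ A E (x', x') := by
  obtain ⟨𝔄, rfl⟩ := hS.isSubalg
  obtain ⟨Etr, hEtr, hEtr_apply⟩ := hS.transpClosed E hE
  obtain ⟨c, hc⟩ := hS.constJ (A * Etr) (mul_mem hA hEtr)
  have hAEtr : ⇑(A * Etr) = fun p => A p * E p.swap := funext fun p => by simp [hEtr_apply]
  rw [hAEtr] at hc
  rw [matProd_apply_diag μ A E x, matProd_apply_diag μ A E x', hc, hc]

theorem stmt7_general [TopologicalSpace X]
    [MeasurableSpace X]
    (μ : Measure X)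
    (S : Set C(X × X, ℂ)) (hBMA : IsBMA μ S) :
    ∀ A ∈ S, ∀ x x' : X, A (x, x) = A (x', x') := by
  intro A hA x x'
  obtain ⟨ι, l, hl, E, hES, hE⟩ := hBMA.approxId
  have hlim (z : X) : Tendsto (fun n => matProd μ A (E n) (z, z)) l (𝓝 (A (z, z))) :=
    (hE A).2.tendsto_at (z, z)
  exact tendsto_nhds_unique
    ((hlim x).congr fun n => hBMA.matProd_apply_diag_eq hA (hES n) x x') (hlim x')

theorem stmt7 [TopologicalSpace X] [CompactSpace X] [T2Space X] [Nonempty X]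
    [MeasurableSpace X] [BorelSpace X]
    (μ : Measure X) [IsFiniteMeasure μ] [μ.Regular] [μ.IsOpenPosMeasure]
    (S : Set C(X × X, ℂ)) (hBMA : IsBMA μ S) :
    ∀ A ∈ S, ∀ x x' : X, A (x, x) = A (x', x') :=
  stmt7_general μ S hBMA
end
end

section
/- Let 𝔄 be a Bose–Mesner algebra and let x₀, x ∈ X be such that A(x₀,x) = A(x₀,x₀) for every A ∈ 𝔄. Then x = x₀. Consequently, R_𝔄⁻¹(i₀) = Δ_X, where i₀ ∈ I_𝔄 denotes the evaluation character at any diagonal point (x₀,x₀). -/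
open MeasureTheory Topology Filter

noncomputable section

variable {X : Type*} {I : Type*}

universe w

/-- The character space `I_𝔄` of a unital subalgebra of `C(X × X, ℂ)` with the
Hadamard (pointwise) product: all unital `•`-algebra homomorphisms `𝔄 → ℂ`,
with the weak-* (pointwise convergence) topology. -/
def CharSp [TopologicalSpace X] (𝔄 : StarSubalgebra ℂ C(X × X, ℂ)) : Type _ :=
  {φ : 𝔄 → ℂ // φ 1 = 1 ∧ (∀ A B, φ (A * B) = φ A * φ B) ∧
    (∀ A B, φ (A + B) = φ A + φ B) ∧ ∀ (c : ℂ) (A : 𝔄), φ (c • A) = c * φ A}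

instance [TopologicalSpace X] (𝔄 : StarSubalgebra ℂ C(X × X, ℂ)) :
    TopologicalSpace (CharSp 𝔄) := by
  unfold CharSp; infer_instance

/-- The map `R_𝔄 : X × X → I_𝔄`, sending `(x, y)` to the evaluation character. -/
def evalChar [TopologicalSpace X] (𝔄 : StarSubalgebra ℂ C(X × X, ℂ)) (p : X × X) :
    CharSp 𝔄 :=
  ⟨fun A => (A : C(X × X, ℂ)) p, rfl, fun _ _ => rfl, fun _ _ => rfl,
    fun _ _ => rfl⟩

/-!
Every element of a Bose–Mesner algebra has constant diagonal. If no `A ∈ 𝔄` distinguishes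
`(x₀, x)` from `(x₀, x₀)`, then the Gram kernel `Aᴴ ∘ A ∈ 𝔄` takes the same value at `(x, x)`,
`(x, x₀)`, `(x₀, x)` and `(x₀, x₀)`, so `‖A(·, x) - A(·, x₀)‖₂ = 0` and, by continuity and strict
positivity of `μ`, the columns `x` and `x₀` of every `A ∈ 𝔄` coincide. Multiplying an arbitrary
continuous kernel on the right by the approximate identity transfers this to all of
`C(X × X, ℂ)`, which separates the points of the compact Hausdorff space `X`.
-/

section Integrals

variable [TopologicalSpace X] [CompactSpace X] [MeasurableSpace X] [OpensMeasurableSpace X]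
  {μ : Measure X} [IsFiniteMeasure μ]

lemma integral_star_sub_mul_sub {a b : X → ℂ} (ha : Continuous a) (hb : Continuous b) :
    ∫ y, star (a y - b y) * (a y - b y) ∂μ =
      (∫ y, star (a y) * a y ∂μ) - (∫ y, star (a y) * b y ∂μ) -
        (∫ y, star (b y) * a y ∂μ) + ∫ y, star (b y) * b y ∂μ := by
  have hint : ∀ f g : X → ℂ, Continuous f → Continuous g →
      Integrable (fun y => star (f y) * g y) μ := fun f g hf hg =>
    ((continuous_star.comp hf).mul hg).integrable_of_hasCompactSupport
      (.of_compactSpace _)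
  have hexp : (fun y => star (a y - b y) * (a y - b y)) = fun y =>
      (star (a y) * a y - star (a y) * b y) - (star (b y) * a y - star (b y) * b y) := by
    funext y
    rw [star_sub]
    ring
  rw [hexp, integral_sub, integral_sub (hint a a ha ha) (hint a b ha hb),
    integral_sub (hint b a hb ha) (hint b b hb hb)]
  · ring
  · exact (hint a a ha ha).sub (hint a b ha hb)
  · exact (hint b a hb ha).sub (hint b b hb hb)

lemma eq_zero_of_integral_star_mul_self_eq_zero [μ.IsOpenPosMeasure] {f : X → ℂ}
    (hf : Continuous f) (h : ∫ y, star (f y) * f y ∂μ = 0) (y : X) : f y = 0 := by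
  have hnormSq : ∫ y, Complex.normSq (f y) ∂μ = 0 := by
    apply Complex.ofReal_injective
    rw [← integral_complex_ofReal, Complex.ofReal_zero, ← h]
    simp only [Complex.normSq_eq_conj_mul_self, Complex.star_def]
  by_contra hy
  have hpos := (Complex.continuous_normSq.comp hf).integral_pos_of_hasCompactSupport_nonneg_nonzero
    (μ := μ) (.of_compactSpace _) (fun y => Complex.normSq_nonneg (f y))
    (x := y) (by simpa using hy)
  exact hpos.ne' hnormSq

end Integrals

lemma evalChar_eq_evalChar_iff [TopologicalSpace X] {𝔄 : StarSubalgebra ℂ C(X × X, ℂ)}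
    {p q : X × X} :
    evalChar 𝔄 p = evalChar 𝔄 q ↔ ∀ A : 𝔄, (A : C(X × X, ℂ)) p = (A : C(X × X, ℂ)) q :=
  ⟨fun h A => congrArg (fun φ : CharSp 𝔄 => φ.1 A) h, fun h => Subtype.ext (funext h)⟩

namespace IsBMA

variable [TopologicalSpace X] [MeasurableSpace X] {μ : Measure X}
  {𝔄 : StarSubalgebra ℂ C(X × X, ℂ)}

/-- The row sums of `E • Aᵀ` are constant by (BMA1b); at `(u, u)` they are `(E ∘ A)(u, u)`, which
tends to `A(u, u)` along the approximate identity. -/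
theorem apply_diag_eq (hBMA : IsBMA μ (𝔄 : Set C(X × X, ℂ))) {A : C(X × X, ℂ)} (hA : A ∈ 𝔄)
    (z w : X) : A (z, z) = A (w, w) := by
  obtain ⟨ι, l, hl, E, hE, hEapprox⟩ := hBMA.approxId
  obtain ⟨B, hB, hBA⟩ := hBMA.transpClosed A hA
  choose c hc using fun n => hBMA.constJ _ (mul_mem (hE n) hB)
  have hlim : ∀ u : X, Tendsto c l (𝓝 (A (u, u))) := by
    intro u
    refine ((hEapprox A).1.tendsto_at (u, u)).congr fun n => ?_
    rw [← hc n (u, u)]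
    refine integral_congr_ae (.of_forall fun y => ?_)
    simp [hBA]
  exact tendsto_nhds_unique (hlim z) (hlim w)

theorem apply_swap_eq_of_forall_apply_eq (hBMA : IsBMA μ (𝔄 : Set C(X × X, ℂ))) {x₀ x : X}
    (h : ∀ A : 𝔄, (A : C(X × X, ℂ)) (x₀, x) = (A : C(X × X, ℂ)) (x₀, x₀))
    {A : C(X × X, ℂ)} (hA : A ∈ 𝔄) : A (x, x₀) = A (x₀, x₀) := by
  obtain ⟨B, hB, hBA⟩ := hBMA.transpClosed A hA
  simpa [hBA] using h ⟨B, hB⟩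

theorem exists_mem_integral_star_mul_eq (hBMA : IsBMA μ (𝔄 : Set C(X × X, ℂ)))
    {A : C(X × X, ℂ)} (hA : A ∈ 𝔄) :
    ∃ C ∈ 𝔄, ∀ z u : X, ∫ y, star (A (y, z)) * A (y, u) ∂μ = C (z, u) := by
  obtain ⟨B, hB, hBA⟩ := hBMA.transpClosed (star A) (star_mem hA)
  obtain ⟨C, hC, hBAC⟩ := hBMA.mulClosed B hB A hA
  refine ⟨C, hC, fun z u => ?_⟩
  rw [← hBAC (z, u)]
  refine integral_congr_ae (.of_forall fun y => ?_)
  simp [hBA]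

theorem apply_col_eq_of_forall_apply_eq [CompactSpace X] [OpensMeasurableSpace X]
    [IsFiniteMeasure μ] [μ.IsOpenPosMeasure] (hBMA : IsBMA μ (𝔄 : Set C(X × X, ℂ)))
    {x₀ x : X} (h : ∀ A : 𝔄, (A : C(X × X, ℂ)) (x₀, x) = (A : C(X × X, ℂ)) (x₀, x₀))
    {A : C(X × X, ℂ)} (hA : A ∈ 𝔄) (y : X) : A (y, x) = A (y, x₀) := by
  obtain ⟨C, hC, hGram⟩ := hBMA.exists_mem_integral_star_mul_eq hA
  have hcol : ∀ z, Continuous fun y => A (y, z) := fun z => by fun_prop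
  have hnorm : ∫ y, star (A (y, x) - A (y, x₀)) * (A (y, x) - A (y, x₀)) ∂μ = 0 := by
    rw [integral_star_sub_mul_sub (hcol x) (hcol x₀), hGram, hGram, hGram, hGram,
      hBMA.apply_diag_eq hC x x₀, hBMA.apply_swap_eq_of_forall_apply_eq h hC, h ⟨C, hC⟩]
    ring
  exact sub_eq_zero.mp
    (eq_zero_of_integral_star_mul_self_eq_zero ((hcol x).sub (hcol x₀)) hnorm y)

theorem apply_col_eq_of_forall_mem (hBMA : IsBMA μ (𝔄 : Set C(X × X, ℂ))) {x₀ x : X}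
    (hcol : ∀ A ∈ 𝔄, ∀ y, A (y, x) = A (y, x₀)) (G : C(X × X, ℂ)) (z : X) :
    G (z, x) = G (z, x₀) := by
  obtain ⟨ι, l, hl, E, hE, hEapprox⟩ := hBMA.approxId
  have hsame : ∀ n, matProd μ G (E n) (z, x) = matProd μ G (E n) (z, x₀) := fun n =>
    integral_congr_ae (.of_forall fun y => by simp only [hcol (E n) (hE n) y])
  exact tendsto_nhds_unique (((hEapprox G).2.tendsto_at (z, x)).congr hsame)
    ((hEapprox G).2.tendsto_at (z, x₀))

theorem eq_of_forall_apply_eq [CompactSpace X] [T2Space X] [OpensMeasurableSpace X]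
    [IsFiniteMeasure μ] [μ.IsOpenPosMeasure] (hBMA : IsBMA μ (𝔄 : Set C(X × X, ℂ)))
    {x₀ x : X} (h : ∀ A : 𝔄, (A : C(X × X, ℂ)) (x₀, x) = (A : C(X × X, ℂ)) (x₀, x₀)) :
    x = x₀ := by
  by_contra hne
  obtain ⟨f, hf : Continuous f, hfx⟩ := separatesPoints_continuous_of_t35Space hne
  have hG := hBMA.apply_col_eq_of_forall_mem
    (fun A hA => hBMA.apply_col_eq_of_forall_apply_eq h hA)
    ⟨fun p => (f p.2 : ℂ), by fun_prop⟩ x₀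
  exact hfx (Complex.ofReal_injective hG)

theorem preimage_evalChar_diag [CompactSpace X] [T2Space X] [OpensMeasurableSpace X]
    [IsFiniteMeasure μ] [μ.IsOpenPosMeasure] (hBMA : IsBMA μ (𝔄 : Set C(X × X, ℂ))) (x₀ : X) :
    evalChar 𝔄 ⁻¹' {evalChar 𝔄 (x₀, x₀)} = {p : X × X | p.1 = p.2} := by
  ext ⟨x, y⟩
  simp only [Set.mem_preimage, Set.mem_singleton_iff, Set.mem_ofPred_eq,
    evalChar_eq_evalChar_iff]
  constructor
  · intro h
    refine (hBMA.eq_of_forall_apply_eq fun A => ?_).symm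
    rw [h A, hBMA.apply_diag_eq A.2 x₀ x]
  · rintro rfl A
    exact hBMA.apply_diag_eq A.2 x x₀

end IsBMA

theorem stmt8_general [TopologicalSpace X] [CompactSpace X] [T2Space X]
    [MeasurableSpace X] [BorelSpace X]
    (μ : Measure X) [IsFiniteMeasure μ] [μ.IsOpenPosMeasure]
    (𝔄 : StarSubalgebra ℂ C(X × X, ℂ))
    (hBMA : IsBMA μ (𝔄 : Set C(X × X, ℂ))) :
    (∀ x₀ x : X,
      (∀ A : 𝔄, (A : C(X × X, ℂ)) (x₀, x) = (A : C(X × X, ℂ)) (x₀, x₀)) →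
        x = x₀) ∧
    ∀ x₀ : X, evalChar 𝔄 ⁻¹' {evalChar 𝔄 (x₀, x₀)} = {p : X × X | p.1 = p.2} :=
  ⟨fun _ _ h => hBMA.eq_of_forall_apply_eq h, hBMA.preimage_evalChar_diag⟩

theorem stmt8 [TopologicalSpace X] [CompactSpace X] [T2Space X] [Nonempty X]
    [MeasurableSpace X] [BorelSpace X]
    (μ : Measure X) [IsFiniteMeasure μ] [μ.Regular] [μ.IsOpenPosMeasure]
    (𝔄 : StarSubalgebra ℂ C(X × X, ℂ))
    (hBMA : IsBMA μ (𝔄 : Set C(X × X, ℂ))) :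
    (∀ x₀ x : X,
      (∀ A : 𝔄, (A : C(X × X, ℂ)) (x₀, x) = (A : C(X × X, ℂ)) (x₀, x₀)) →
        x = x₀) ∧
    ∀ x₀ : X, evalChar 𝔄 ⁻¹' {evalChar 𝔄 (x₀, x₀)} = {p : X × X | p.1 = p.2} :=
  stmt8_general μ 𝔄 hBMA
end
end

section
/- Let 𝔄 ⊆ C(X×X,ℂ) be a set of continuous functions closed under the matrix product ∘, under transpose ⊤, and under complex conjugation. Suppose x₀, x ∈ X satisfy B(x₀,x) = B(x₀,x₀) and B(x,x) = B(x₀,x₀) for every B ∈ 𝔄. Then ∫_X |A(x₀,y) − A(x,y)|² dμ_X(y) = 0 for every A ∈ 𝔄; hence, by continuity and strict positivity of μ_X, A(x₀,y) = A(x,y) for all y ∈ X and all A ∈ 𝔄. -/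
open MeasureTheory Topology Filter

noncomputable section

variable {X : Type*} {I : Type*}

theorem stmt9 [TopologicalSpace X] [CompactSpace X] [T2Space X] [Nonempty X]
    [MeasurableSpace X] [BorelSpace X]
    (μ : Measure X) [IsFiniteMeasure μ] [μ.Regular] [μ.IsOpenPosMeasure]
    (S : Set C(X × X, ℂ))
    (hmul : ∀ A ∈ S, ∀ B ∈ S, ∃ C ∈ S, ∀ p : X × X, matProd μ ⇑A ⇑B p = C p)
    (htransp : ∀ A ∈ S, ∃ B ∈ S, ∀ p : X × X, B p = A p.swap)
    (hconj : ∀ A ∈ S, ∃ B ∈ S, ∀ p : X × X, B p = starRingEnd ℂ (A p))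
    (x₀ x : X)
    (hx : ∀ B ∈ S, B (x₀, x) = B (x₀, x₀))
    (hx' : ∀ B ∈ S, B (x, x) = B (x₀, x₀)) :
    ∀ A ∈ S, (∫ y, ‖A (x₀, y) - A (x, y)‖ ^ 2 ∂μ) = 0 ∧
      ∀ y : X, A (x₀, y) = A (x, y) := by
  intro A hA
  obtain ⟨A', hA', hA'eq⟩ := hconj A hA
  obtain ⟨A'', hA'', hA''eq⟩ := htransp A' hA'
  obtain ⟨C, hC, hCeq⟩ := hmul A hA A'' hA''
  -- integrability of continuous functions
  have hint : ∀ f : X → ℂ, Continuous f → Integrable f μ := fun f hf =>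
    hf.integrable_of_hasCompactSupport (HasCompactSupport.of_compactSpace f)
  have hAc : ∀ a : X, Continuous fun y => A (a, y) := fun a =>
    A.continuous.comp (continuous_const.prodMk continuous_id)
  have hintp : ∀ a b : X, Integrable (fun y => A (a, y) * starRingEnd ℂ (A (b, y))) μ :=
    fun a b => hint _ ((hAc a).mul (Complex.continuous_conj.comp (hAc b)))
  have hCForm : ∀ a b : X, C (a, b) = ∫ y, A (a, y) * starRingEnd ℂ (A (b, y)) ∂μ := by
    intro a b
    rw [← hCeq (a, b)]
    unfold matProd
    refine integral_congr_ae (Filter.EventuallyEq.of_eq ?_)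
    funext y
    rw [hA''eq (y, b), hA'eq]
    rfl
  have h3 : ∀ a b : X, C (b, a) = starRingEnd ℂ (C (a, b)) := by
    intro a b
    rw [hCForm, hCForm, ← integral_conj]
    refine integral_congr_ae (Filter.EventuallyEq.of_eq ?_)
    funext y
    simp [mul_comm]
  have h1 : C (x₀, x) = C (x₀, x₀) := hx C hC
  have h2 : C (x, x) = C (x₀, x₀) := hx' C hC
  have h4 : C (x₀, x₀) = starRingEnd ℂ (C (x₀, x₀)) := h3 x₀ x₀
  have key : (∫ y, (‖A (x₀, y) - A (x, y)‖ ^ 2 : ℝ) ∂μ) = 0 := by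
    have hz : (∫ y, (A (x₀, y) - A (x, y)) * starRingEnd ℂ (A (x₀, y) - A (x, y)) ∂μ) = 0 := by
      have expand : ∀ y : X,
          (A (x₀, y) - A (x, y)) * starRingEnd ℂ (A (x₀, y) - A (x, y)) =
          A (x₀, y) * starRingEnd ℂ (A (x₀, y)) - A (x₀, y) * starRingEnd ℂ (A (x, y))
          - (A (x, y) * starRingEnd ℂ (A (x₀, y)) - A (x, y) * starRingEnd ℂ (A (x, y))) := by
        intro y; ring_nf; simp [map_sub]; ring
      have i1 : Integrable (fun y => A (x₀, y) * starRingEnd ℂ (A (x₀, y))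
          - A (x₀, y) * starRingEnd ℂ (A (x, y))) μ := (hintp x₀ x₀).sub (hintp x₀ x)
      have i2 : Integrable (fun y => A (x, y) * starRingEnd ℂ (A (x₀, y))
          - A (x, y) * starRingEnd ℂ (A (x, y))) μ := (hintp x x₀).sub (hintp x x)
      rw [integral_congr_ae (Filter.EventuallyEq.of_eq (funext expand)),
        integral_sub i1 i2,
        integral_sub (hintp x₀ x₀) (hintp x₀ x), integral_sub (hintp x x₀) (hintp x x),
        ← hCForm, ← hCForm, ← hCForm, ← hCForm]
      rw [h1, h2, h3 x₀ x, h1, ← h4]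
      ring
    have hcast : (∫ y, ((‖A (x₀, y) - A (x, y)‖ ^ 2 : ℝ) : ℂ) ∂μ) =
        ((∫ y, (‖A (x₀, y) - A (x, y)‖ ^ 2 : ℝ) ∂μ : ℝ) : ℂ) :=
      integral_ofReal
    have : ((∫ y, (‖A (x₀, y) - A (x, y)‖ ^ 2 : ℝ) ∂μ : ℝ) : ℂ) = 0 := by
      rw [← hcast, ← hz]
      refine integral_congr_ae (Filter.EventuallyEq.of_eq ?_)
      funext y
      rw [Complex.mul_conj, Complex.sq_norm]
    exact_mod_cast this
  refine ⟨key, ?_⟩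
  have hcont : Continuous fun y => (‖A (x₀, y) - A (x, y)‖ ^ 2 : ℝ) :=
    (continuous_norm.comp ((hAc x₀).sub (hAc x))).pow 2
  have hnn : 0 ≤ fun y => (‖A (x₀, y) - A (x, y)‖ ^ 2 : ℝ) := fun y => by positivity
  have hire : Integrable (fun y => (‖A (x₀, y) - A (x, y)‖ ^ 2 : ℝ)) μ :=
    hcont.integrable_of_hasCompactSupport (HasCompactSupport.of_compactSpace _)
  have hae : (fun y => (‖A (x₀, y) - A (x, y)‖ ^ 2 : ℝ)) =ᵐ[μ] 0 :=
    (integral_eq_zero_iff_of_nonneg hnn hire).mp key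
  have heq := (hcont.ae_eq_iff_eq μ continuous_const).mp hae
  intro y
  have : ‖A (x₀, y) - A (x, y)‖ ^ 2 = 0 := congrFun heq y
  have habs : ‖A (x₀, y) - A (x, y)‖ = 0 := by
    nlinarith [norm_nonneg (A (x₀, y) - A (x, y))]
  exact sub_eq_zero.mp (norm_eq_zero.mp habs)
end
end

section
/- Let 𝔄 be a Bose–Mesner algebra. For all Borel sets W₁, W₂ ⊆ I_𝔄, the function (x,z) ↦ μ_X({y ∈ X : R_𝔄(x,y) ∈ W₁ and R_𝔄(y,z) ∈ W₂}) is a continuous function belonging to 𝔄, and it is constant on each fiber R_𝔄⁻¹(k), k ∈ I_𝔄. -/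
set_option maxHeartbeats 1000000
set_option synthInstance.maxHeartbeats 200000


open MeasureTheory Topology Filter

noncomputable section

variable {X : Type*} {I : Type*}

universe w

namespace BMAAux

variable {X : Type*} [TopologicalSpace X] (𝔄 : StarSubalgebra ℂ C(X × X, ℂ))

instance : T2Space (CharSp 𝔄) := by unfold CharSp; infer_instance

theorem continuous_evalChar : Continuous (evalChar 𝔄) := by
  unfold evalChar
  exact Continuous.subtype_mk
    (continuous_pi fun A : ↥𝔄 => (A : C(X × X, ℂ)).continuous) _

def Kset : Set (CharSp 𝔄) := Set.range (evalChar 𝔄)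

def RKmap (p : X × X) : (Kset 𝔄) := ⟨evalChar 𝔄 p, Set.mem_range_self p⟩

theorem continuous_RKmap : Continuous (RKmap 𝔄) :=
  (continuous_evalChar 𝔄).subtype_mk _

instance [CompactSpace X] : CompactSpace (Kset 𝔄) :=
  isCompact_iff_compactSpace.mp (isCompact_range (continuous_evalChar 𝔄))

theorem charsp_zero (φ : CharSp 𝔄) : φ.1 0 = 0 := by
  have h := φ.2.2.2.1 0 0
  rw [add_zero] at h
  exact (left_eq_add.mp h)

/-- The Gelfand-type star algebra homomorphism `𝔄 → C(K, ℂ)`. -/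
def Phi : 𝔄 →⋆ₐ[ℂ] C((Kset 𝔄), ℂ) where
  toFun A := ⟨fun k => k.1.1 A,
    (continuous_apply A).comp (continuous_subtype_val.comp continuous_subtype_val)⟩
  map_one' := ContinuousMap.ext fun k => k.1.2.1
  map_mul' A B := ContinuousMap.ext fun k => k.1.2.2.1 A B
  map_zero' := ContinuousMap.ext fun k => charsp_zero 𝔄 k.1
  map_add' A B := ContinuousMap.ext fun k => k.1.2.2.2.1 A B
  commutes' c := ContinuousMap.ext fun k => by
    have h1 := k.1.2.2.2.2 c 1
    have h2 := k.1.2.1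
    show k.1.1 (algebraMap ℂ 𝔄 c) = algebraMap ℂ C((Kset 𝔄), ℂ) c k
    rw [Algebra.algebraMap_eq_smul_one, h1, h2, mul_one]
    rfl
  map_star' A := ContinuousMap.ext fun k => by
    obtain ⟨p, hp⟩ := k.2
    simp only [ContinuousMap.coe_mk, ContinuousMap.star_apply]
    rw [← hp]
    show (↑(star A) : C(X × X, ℂ)) p = star ((↑A : C(X × X, ℂ)) p)
    rw [StarMemClass.coe_star]
    rfl

theorem Phi_sep : (Phi 𝔄).range.SeparatesPoints := by
  intro k1 k2 hne
  have h : k1.1.1 ≠ k2.1.1 := by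
    intro h
    exact hne (Subtype.ext (Subtype.ext h))
  obtain ⟨A, hA⟩ := Function.ne_iff.mp h
  exact ⟨_, ⟨Phi 𝔄 A, ⟨A, rfl⟩, rfl⟩, hA⟩

theorem exists_comp [CompactSpace X] (hcl : IsClosed (𝔄 : Set C(X × X, ℂ)))
    (f : C((Kset 𝔄), ℂ)) :
    ∃ A : C(X × X, ℂ), A ∈ 𝔄 ∧ ∀ p, A p = f (RKmap 𝔄 p) := by
  set g : C(X × X, ℂ) := f.comp ⟨RKmap 𝔄, continuous_RKmap 𝔄⟩ with hgdef
  have hg : g ∈ closure (𝔄 : Set C(X × X, ℂ)) := by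
    rw [Metric.mem_closure_iff]
    intro ε hε
    have hf : f ∈ closure ((Phi 𝔄).range : Set C((Kset 𝔄), ℂ)) := by
      rw [← StarSubalgebra.topologicalClosure_coe,
        ContinuousMap.starSubalgebra_topologicalClosure_eq_top_of_separatesPoints _ (Phi_sep 𝔄)]
      trivial
    obtain ⟨b, hb, hdist⟩ := Metric.mem_closure_iff.mp hf ε hε
    obtain ⟨A, rfl⟩ : ∃ A : 𝔄, Phi 𝔄 A = b := hb
    refine ⟨(A : C(X × X, ℂ)), A.2, ?_⟩
    calc dist g (A : C(X × X, ℂ)) ≤ dist f (Phi 𝔄 A) := by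
          refine ContinuousMap.dist_le dist_nonneg |>.mpr fun p => ?_
          have : dist (f (RKmap 𝔄 p)) ((Phi 𝔄 A) (RKmap 𝔄 p)) ≤ dist f (Phi 𝔄 A) :=
            ContinuousMap.dist_apply_le_dist _
          exact this
      _ < ε := hdist
  rw [hcl.closure_eq] at hg
  exact ⟨g, hg, fun p => rfl⟩

theorem exists_urysohn_elt [CompactSpace X] (hcl : IsClosed (𝔄 : Set C(X × X, ℂ)))
    (T1 T2 : Set (CharSp 𝔄)) (h1 : IsClosed T1) (h2 : IsClosed T2)
    (hd : Disjoint T1 T2) :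
    ∃ (A : C(X × X, ℂ)) (g : X × X → ℝ), A ∈ 𝔄 ∧ Continuous g ∧
      (∀ p, A p = (g p : ℂ)) ∧ (∀ p, g p ∈ Set.Icc (0:ℝ) 1) ∧
      (∀ p, evalChar 𝔄 p ∈ T1 → g p = 1) ∧ (∀ p, evalChar 𝔄 p ∈ T2 → g p = 0) := by
  set s : Set (Kset 𝔄) := Subtype.val ⁻¹' T1 with hs
  set t : Set (Kset 𝔄) := Subtype.val ⁻¹' T2 with ht
  have hscl : IsClosed s := h1.preimage continuous_subtype_val
  have htcl : IsClosed t := h2.preimage continuous_subtype_val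
  have hdst : Disjoint t s := (hd.preimage Subtype.val).symm
  obtain ⟨f, hf0, hf1, hf01⟩ := exists_continuous_zero_one_of_isClosed htcl hscl hdst
  set fC : C((Kset 𝔄), ℂ) :=
    (⟨Complex.ofReal, Complex.continuous_ofReal⟩ : C(ℝ, ℂ)).comp f with hfC
  obtain ⟨A, hA, hAeq⟩ := exists_comp 𝔄 hcl fC
  refine ⟨A, fun p => f (RKmap 𝔄 p), hA, f.continuous.comp (continuous_RKmap 𝔄),
    fun p => hAeq p, fun p => hf01 _, fun p hp => ?_, fun p hp => ?_⟩
  · exact hf1 (show RKmap 𝔄 p ∈ s from hp)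
  · exact hf0 (show RKmap 𝔄 p ∈ t from hp)

theorem measure_map_eq {X : Type*} [TopologicalSpace X] [CompactSpace X] [T2Space X]
    [MeasurableSpace X] [BorelSpace X]
    (μ : Measure X) [IsFiniteMeasure μ] [μ.Regular]
    (𝔄 : StarSubalgebra ℂ C(X × X, ℂ)) (hcl : IsClosed (𝔄 : Set C(X × X, ℂ)))
    (arr : X → X → X × X) (hc : ∀ x, Continuous (arr x))
    (hconst : ∀ A : C(X × X, ℂ), A ∈ 𝔄 → ∃ c : ℂ, ∀ x, ∫ y, A (arr x y) ∂μ = c) :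
    ∀ (x x' : X) (s : Set (CharSp 𝔄)), MeasurableSet[borel (CharSp 𝔄)] s →
      μ ((fun y => evalChar 𝔄 (arr x y)) ⁻¹' s) =
      μ ((fun y => evalChar 𝔄 (arr x' y)) ⁻¹' s) := by
  letI : MeasurableSpace (CharSp 𝔄) := borel _
  haveI : BorelSpace (CharSp 𝔄) := ⟨rfl⟩
  have hce : ∀ x : X, Continuous fun y => evalChar 𝔄 (arr x y) := fun x =>
    (continuous_evalChar 𝔄).comp (hc x)
  have hme : ∀ x : X, Measurable fun y => evalChar 𝔄 (arr x y) := fun x =>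
    (hce x).measurable
  have key : ∀ (U : Set (CharSp 𝔄)), IsOpen U → ∀ x x' : X,
      μ ((fun y => evalChar 𝔄 (arr x y)) ⁻¹' U) ≤
      μ ((fun y => evalChar 𝔄 (arr x' y)) ⁻¹' U) := by
    intro U hU x x'
    have hopen : IsOpen ((fun y => evalChar 𝔄 (arr x y)) ⁻¹' U) := hU.preimage (hce x)
    rw [hopen.measure_eq_iSup_isCompact]
    refine iSup_le fun Cc => iSup_le fun hCcU => iSup_le fun hCc => ?_
    -- the image of `Cc` in the character space
    set S1 : Set (CharSp 𝔄) := (fun y => evalChar 𝔄 (arr x y)) '' Cc with hS1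
    have hS1cp : IsCompact S1 := hCc.image (hce x)
    have hS1U : S1 ⊆ U := Set.image_subset_iff.mpr hCcU
    obtain ⟨A, g, hA, hgc, hAg, hg01, hg1, hg0⟩ :=
      exists_urysohn_elt 𝔄 hcl S1 Uᶜ hS1cp.isClosed (isClosed_compl_iff.mpr hU)
        (Set.disjoint_compl_right_iff_subset.mpr hS1U)
    obtain ⟨c, hcc⟩ := hconst A hA
    -- integrability facts
    have hint : ∀ x'' : X, Integrable (fun y => g (arr x'' y)) μ :=
      fun x'' => ((hgc.comp (hc x'')).integrable_of_hasCompactSupport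
        (HasCompactSupport.of_compactSpace _))
    have key2 : ∀ x'' : X, (↑(∫ y, g (arr x'' y) ∂μ) : ℂ) = c := by
      intro x''
      have e := hcc x''
      simp_rw [hAg] at e
      exact (integral_ofReal (𝕜 := ℂ)).symm.trans e
    have hgreal : ∀ x'' : X, ∫ y, g (arr x'' y) ∂μ = ∫ y, g (arr x y) ∂μ := by
      intro x''
      have h := (key2 x'').trans (key2 x).symm
      exact_mod_cast h
    have step1 : (μ Cc).toReal ≤ ∫ y, g (arr x y) ∂μ := by
      rw [← measureReal_def, ← integral_indicator_one hCc.measurableSet]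
      refine integral_mono ((integrable_const (1:ℝ)).indicator hCc.measurableSet) (hint x) ?_
      intro y
      by_cases hy : y ∈ Cc
      · simp only [Set.indicator_of_mem hy, Pi.one_apply]
        exact le_of_eq (hg1 _ (Set.mem_image_of_mem _ hy)).symm
      · simp only [Set.indicator_of_notMem hy]
        exact (hg01 _).1
    have step2 : ∫ y, g (arr x' y) ∂μ ≤
        (μ ((fun y => evalChar 𝔄 (arr x' y)) ⁻¹' U)).toReal := by
      rw [← measureReal_def, ← integral_indicator_one ((hme x') hU.measurableSet)]
      refine integral_mono (hint x')
        ((integrable_const (1:ℝ)).indicator ((hme x') hU.measurableSet)) ?_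
      intro y
      by_cases hy : y ∈ (fun y => evalChar 𝔄 (arr x' y)) ⁻¹' U
      · simp only [Set.indicator_of_mem hy, Pi.one_apply]
        exact (hg01 _).2
      · simp only [Set.indicator_of_notMem hy]
        exact le_of_eq (hg0 _ hy)
    have : (μ Cc).toReal ≤ (μ ((fun y => evalChar 𝔄 (arr x' y)) ⁻¹' U)).toReal := by
      calc (μ Cc).toReal ≤ ∫ y, g (arr x y) ∂μ := step1
        _ = ∫ y, g (arr x' y) ∂μ := (hgreal x').symm
        _ ≤ _ := step2
    exact (ENNReal.toReal_le_toReal (measure_ne_top μ _) (measure_ne_top μ _)).mp this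
  intro x x' s hs
  have hmeq : Measure.map (fun y => evalChar 𝔄 (arr x y)) μ =
      Measure.map (fun y => evalChar 𝔄 (arr x' y)) μ := by
    haveI := Measure.isFiniteMeasure_map μ (fun y => evalChar 𝔄 (arr x y))
    refine ext_of_generate_finite {s : Set (CharSp 𝔄) | IsOpen s} rfl
      isPiSystem_isOpen ?_ ?_
    · intro U hU
      replace hU : IsOpen U := hU
      rw [Measure.map_apply (hme x) hU.measurableSet,
        Measure.map_apply (hme x') hU.measurableSet]
      exact le_antisymm (key U hU x x') (key U hU x' x)
    · rw [Measure.map_apply (hme x) MeasurableSet.univ,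
        Measure.map_apply (hme x') MeasurableSet.univ]
      simp
  rw [← Measure.map_apply (hme x) hs, hmeq, Measure.map_apply (hme x') hs]

theorem exists_indicator_approx {X : Type*} [TopologicalSpace X] [CompactSpace X] [T2Space X]
    [MeasurableSpace X] [BorelSpace X]
    (μ : Measure X) [IsFiniteMeasure μ] [μ.Regular]
    (𝔄 : StarSubalgebra ℂ C(X × X, ℂ)) (hcl : IsClosed (𝔄 : Set C(X × X, ℂ)))
    (arr : X → X → X × X) (hc : ∀ x, Continuous (arr x))
    (hmap : ∀ (x x' : X) (s : Set (CharSp 𝔄)), MeasurableSet[borel (CharSp 𝔄)] s →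
      μ ((fun y => evalChar 𝔄 (arr x y)) ⁻¹' s) =
      μ ((fun y => evalChar 𝔄 (arr x' y)) ⁻¹' s))
    (x₀ : X) (W : Set (CharSp 𝔄)) (hW : MeasurableSet[borel (CharSp 𝔄)] W)
    {ε : ℝ} (hε : 0 < ε) :
    ∃ A : C(X × X, ℂ), A ∈ 𝔄 ∧ (∀ p, ‖A p‖ ≤ 1) ∧ ∀ x,
      ∫ y, ‖A (arr x y) -
        Set.indicator W (fun _ => (1:ℂ)) (evalChar 𝔄 (arr x y))‖ ∂μ ≤ ε := by
  letI : MeasurableSpace (CharSp 𝔄) := borel _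
  haveI : BorelSpace (CharSp 𝔄) := ⟨rfl⟩
  have hce : ∀ x : X, Continuous fun y => evalChar 𝔄 (arr x y) := fun x =>
    (continuous_evalChar 𝔄).comp (hc x)
  have hme : ∀ x : X, Measurable fun y => evalChar 𝔄 (arr x y) := fun x => (hce x).measurable
  have hε2 : ENNReal.ofReal (ε / 2) ≠ 0 := by
    simp only [ne_eq, ENNReal.ofReal_eq_zero, not_le]
    positivity
  obtain ⟨Cc, hCcsub, hCc, hCcμ⟩ :=
    ((hme x₀) hW).exists_isCompact_diff_lt (measure_ne_top μ _) hε2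
  obtain ⟨Dc, hDcsub, hDc, hDcμ⟩ :=
    ((hme x₀) hW.compl).exists_isCompact_diff_lt (measure_ne_top μ _) hε2
  set S1 : Set (CharSp 𝔄) := (fun y => evalChar 𝔄 (arr x₀ y)) '' Cc with hS1def
  set S2 : Set (CharSp 𝔄) := (fun y => evalChar 𝔄 (arr x₀ y)) '' Dc with hS2def
  have hS1W : S1 ⊆ W := Set.image_subset_iff.mpr hCcsub
  have hS2W : S2 ⊆ Wᶜ := Set.image_subset_iff.mpr hDcsub
  have hd : Disjoint S1 S2 :=
    Set.disjoint_left.mpr fun k hk1 hk2 => (hS2W hk2) (hS1W hk1)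
  obtain ⟨A, g, hA, hgc, hAg, hg01, hg1, hg0⟩ :=
    exists_urysohn_elt 𝔄 hcl S1 S2 ((hCc.image (hce x₀)).isClosed)
      ((hDc.image (hce x₀)).isClosed) hd
  have hnorm : ∀ p, ‖A p‖ ≤ 1 := by
    intro p
    rw [hAg, Complex.norm_real, Real.norm_eq_abs]
    obtain ⟨h0, h1⟩ := hg01 p
    exact abs_le.mpr ⟨by linarith, h1⟩
  refine ⟨A, hA, hnorm, fun x => ?_⟩
  set T : Set (CharSp 𝔄) := (S1 ∪ S2)ᶜ with hTdef
  have hTm : MeasurableSet T :=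
    (((hCc.image (hce x₀)).isClosed.measurableSet).union
      ((hDc.image (hce x₀)).isClosed.measurableSet)).compl
  have hpt : ∀ y, ‖A (arr x y) -
      Set.indicator W (fun _ => (1:ℂ)) (evalChar 𝔄 (arr x y))‖ ≤
      Set.indicator ((fun y => evalChar 𝔄 (arr x y)) ⁻¹' T) (fun _ => (1:ℝ)) y := by
    intro y
    by_cases hy1 : evalChar 𝔄 (arr x y) ∈ S1
    · have h1 : A (arr x y) = 1 := by rw [hAg, hg1 _ hy1]; norm_num
      rw [h1, Set.indicator_of_mem (hS1W hy1)]
      simpa using Set.indicator_nonneg (fun _ _ => zero_le_one) y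
    · by_cases hy2 : evalChar 𝔄 (arr x y) ∈ S2
      · have h1 : A (arr x y) = 0 := by rw [hAg, hg0 _ hy2]; norm_num
        rw [h1, Set.indicator_of_notMem (hS2W hy2)]
        simpa using Set.indicator_nonneg (fun _ _ => zero_le_one) y
      · have hyT : y ∈ (fun y => evalChar 𝔄 (arr x y)) ⁻¹' T := by
          simp only [Set.mem_preimage, hTdef, Set.mem_compl_iff, Set.mem_union]
          tauto
        rw [Set.indicator_of_mem hyT]
        by_cases hyW : evalChar 𝔄 (arr x y) ∈ W
        · rw [Set.indicator_of_mem hyW, hAg]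
          have : ((g (arr x y) : ℝ) : ℂ) - 1 = (((g (arr x y) - 1 : ℝ)) : ℂ) := by
            push_cast; ring
          rw [this, Complex.norm_real, Real.norm_eq_abs]
          obtain ⟨h0, h1⟩ := hg01 (arr x y)
          exact abs_le.mpr ⟨by linarith, by linarith⟩
        · rw [Set.indicator_of_notMem hyW, hAg, sub_zero, Complex.norm_real,
            Real.norm_eq_abs]
          obtain ⟨h0, h1⟩ := hg01 (arr x y)
          exact abs_le.mpr ⟨by linarith, h1⟩
  have hindeq : (fun y => Set.indicator W (fun _ => (1:ℂ)) (evalChar 𝔄 (arr x y))) =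
      Set.indicator ((fun y => evalChar 𝔄 (arr x y)) ⁻¹' W) (fun _ => (1:ℂ)) := by
    funext y
    by_cases hy : evalChar 𝔄 (arr x y) ∈ W
    · simp [Set.indicator_apply, hy]
    · simp [Set.indicator_apply, hy]
  have hint1 : Integrable (fun y => ‖A (arr x y) -
      Set.indicator W (fun _ => (1:ℂ)) (evalChar 𝔄 (arr x y))‖) μ := by
    refine Integrable.norm (Integrable.sub ?_ ?_)
    · exact ((map_continuous A).comp (hc x)).integrable_of_hasCompactSupport
        (HasCompactSupport.of_compactSpace _)
    · rw [hindeq]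
      exact (integrable_const (1:ℂ)).indicator ((hme x) hW)
  have hint2 : Integrable
      (fun y => Set.indicator ((fun y => evalChar 𝔄 (arr x y)) ⁻¹' T) (fun _ => (1:ℝ)) y) μ :=
    (integrable_const (1:ℝ)).indicator ((hme x) hTm)
  calc ∫ y, ‖A (arr x y) -
        Set.indicator W (fun _ => (1:ℂ)) (evalChar 𝔄 (arr x y))‖ ∂μ
      ≤ ∫ y, Set.indicator ((fun y => evalChar 𝔄 (arr x y)) ⁻¹' T) (fun _ => (1:ℝ)) y ∂μ :=
        integral_mono hint1 hint2 hpt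
    _ = (μ ((fun y => evalChar 𝔄 (arr x y)) ⁻¹' T)).toReal :=
        (integral_indicator_one ((hme x) hTm)).trans (measureReal_def _ _)
    _ = (μ ((fun y => evalChar 𝔄 (arr x₀ y)) ⁻¹' T)).toReal := by
        rw [hmap x x₀ T hTm]
    _ ≤ ε := by
        have hsub : (fun y => evalChar 𝔄 (arr x₀ y)) ⁻¹' T ⊆
            (((fun y => evalChar 𝔄 (arr x₀ y)) ⁻¹' W) \ Cc) ∪
            (((fun y => evalChar 𝔄 (arr x₀ y)) ⁻¹' Wᶜ) \ Dc) := by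
          intro y hy
          simp only [Set.mem_preimage, hTdef, Set.mem_compl_iff, Set.mem_union] at hy
          push_neg at hy
          by_cases hW' : evalChar 𝔄 (arr x₀ y) ∈ W
          · exact Or.inl ⟨hW', fun hc' => hy.1 (Set.mem_image_of_mem _ hc')⟩
          · exact Or.inr ⟨hW', fun hd' => hy.2 (Set.mem_image_of_mem _ hd')⟩
        have hle : μ ((fun y => evalChar 𝔄 (arr x₀ y)) ⁻¹' T) ≤ ENNReal.ofReal ε := by
          calc μ ((fun y => evalChar 𝔄 (arr x₀ y)) ⁻¹' T)
              ≤ μ ((((fun y => evalChar 𝔄 (arr x₀ y)) ⁻¹' W) \ Cc) ∪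
                  (((fun y => evalChar 𝔄 (arr x₀ y)) ⁻¹' Wᶜ) \ Dc)) := measure_mono hsub
            _ ≤ μ (((fun y => evalChar 𝔄 (arr x₀ y)) ⁻¹' W) \ Cc) +
                μ (((fun y => evalChar 𝔄 (arr x₀ y)) ⁻¹' Wᶜ) \ Dc) := measure_union_le _ _
            _ ≤ ENNReal.ofReal (ε / 2) + ENNReal.ofReal (ε / 2) :=
                add_le_add hCcμ.le hDcμ.le
            _ = ENNReal.ofReal ε := by
                rw [← ENNReal.ofReal_add (by positivity) (by positivity)]
                norm_num
        exact ENNReal.toReal_le_of_le_ofReal hε.le hle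

end BMAAux

theorem stmt10 [TopologicalSpace X] [CompactSpace X] [T2Space X] [Nonempty X]
    [MeasurableSpace X] [BorelSpace X]
    (μ : Measure X) [IsFiniteMeasure μ] [μ.Regular] [μ.IsOpenPosMeasure]
    (𝔄 : StarSubalgebra ℂ C(X × X, ℂ))
    (hBMA : IsBMA μ (𝔄 : Set C(X × X, ℂ)))
    (W₁ W₂ : Set (CharSp 𝔄))
    (hW₁ : MeasurableSet[borel (CharSp 𝔄)] W₁)
    (hW₂ : MeasurableSet[borel (CharSp 𝔄)] W₂) :
    (∃ C ∈ 𝔄, ∀ x z : X, (C : C(X × X, ℂ)) (x, z) =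
      ((μ {y : X | evalChar 𝔄 (x, y) ∈ W₁ ∧ evalChar 𝔄 (y, z) ∈ W₂}).toReal : ℂ)) ∧
    ∀ x z x' z' : X, evalChar 𝔄 (x, z) = evalChar 𝔄 (x', z') →
      μ {y : X | evalChar 𝔄 (x, y) ∈ W₁ ∧ evalChar 𝔄 (y, z) ∈ W₂} =
        μ {y : X | evalChar 𝔄 (x', y) ∈ W₁ ∧ evalChar 𝔄 (y, z') ∈ W₂} := by
  classical
  have hcl : IsClosed (𝔄 : Set C(X × X, ℂ)) := hBMA.isClosed
  letI : MeasurableSpace (CharSp 𝔄) := borel _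
  haveI : BorelSpace (CharSp 𝔄) := ⟨rfl⟩
  obtain ⟨x₀⟩ := ‹Nonempty X›
  have hc1 : ∀ x : X, Continuous fun y : X => ((x, y) : X × X) := fun x =>
    Continuous.prodMk_right x
  have hc2 : ∀ z : X, Continuous fun y : X => ((y, z) : X × X) := fun z =>
    continuous_id.prodMk continuous_const
  have hconst1 : ∀ A : C(X × X, ℂ), A ∈ 𝔄 → ∃ c : ℂ, ∀ x,
      ∫ y, A ((fun x y => ((x, y) : X × X)) x y) ∂μ = c := by
    intro A hA
    obtain ⟨c, hc⟩ := hBMA.constJ A hA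
    refine ⟨c, fun x => ?_⟩
    have h := hc (x, x)
    simpa [matProd] using h
  have hconst2 : ∀ A : C(X × X, ℂ), A ∈ 𝔄 → ∃ c : ℂ, ∀ z,
      ∫ y, A ((fun z y => ((y, z) : X × X)) z y) ∂μ = c := by
    intro A hA
    obtain ⟨B, hB, hBA⟩ := hBMA.transpClosed A hA
    obtain ⟨c, hc⟩ := hBMA.constJ B hB
    refine ⟨c, fun z => ?_⟩
    have h1 := hc (z, z)
    simp only [matProd, mul_one] at h1
    rw [← h1]
    refine integral_congr_ae (Filter.Eventually.of_forall fun y => ?_)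
    exact (hBA (z, y)).symm
  have hmap1 := BMAAux.measure_map_eq μ 𝔄 hcl (fun x y => ((x, y) : X × X)) hc1 hconst1
  have hmap2 := BMAAux.measure_map_eq μ 𝔄 hcl (fun z y => ((y, z) : X × X)) hc2 hconst2
  set F : X × X → ℂ := fun p =>
    ((μ {y : X | evalChar 𝔄 (p.1, y) ∈ W₁ ∧ evalChar 𝔄 (y, p.2) ∈ W₂}).toReal : ℂ) with hF
  have hex : ∀ n : ℕ, ∃ Cn : C(X × X, ℂ), Cn ∈ 𝔄 ∧
      ∀ p : X × X, ‖Cn p - F p‖ ≤ 2 / (n + 1) := by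
    intro n
    have hpos : (0:ℝ) < 1 / (n + 1) := by positivity
    obtain ⟨A, hA, hAn, hAb⟩ := BMAAux.exists_indicator_approx μ 𝔄 hcl
      (fun x y => ((x, y) : X × X)) hc1 hmap1 x₀ W₁ hW₁ hpos
    obtain ⟨B, hB, hBn, hBb⟩ := BMAAux.exists_indicator_approx μ 𝔄 hcl
      (fun z y => ((y, z) : X × X)) hc2 hmap2 x₀ W₂ hW₂ hpos
    obtain ⟨Cn, hCn, hCeq⟩ := hBMA.mulClosed A hA B hB
    refine ⟨Cn, hCn, fun p => ?_⟩
    obtain ⟨x, z⟩ := p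
    set u : X → ℂ := fun y => Set.indicator W₁ (fun _ => (1:ℂ)) (evalChar 𝔄 (x, y)) with hu
    set v : X → ℂ := fun y => Set.indicator W₂ (fun _ => (1:ℂ)) (evalChar 𝔄 (y, z)) with hv
    have he1 : Measurable fun y => evalChar 𝔄 (x, y) :=
      ((BMAAux.continuous_evalChar 𝔄).comp (hc1 x)).measurable
    have he2 : Measurable fun y => evalChar 𝔄 (y, z) :=
      ((BMAAux.continuous_evalChar 𝔄).comp (hc2 z)).measurable
    set S : Set X := {y : X | evalChar 𝔄 (x, y) ∈ W₁ ∧ evalChar 𝔄 (y, z) ∈ W₂} with hS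
    have hSm : MeasurableSet S := (he1 hW₁).inter (he2 hW₂)
    have huv : ∀ y, u y * v y = Set.indicator S (fun _ => (1:ℂ)) y := by
      intro y
      by_cases h1 : evalChar 𝔄 (x, y) ∈ W₁ <;> by_cases h2 : evalChar 𝔄 (y, z) ∈ W₂ <;>
        simp [hu, hv, hS, Set.indicator_apply, h1, h2]
    have hFuv : F (x, z) = ∫ y, u y * v y ∂μ := by
      have h1 : ∀ y, u y * v y = ((Set.indicator S (fun _ => (1:ℝ)) y : ℝ) : ℂ) := by
        intro y
        rw [huv y]
        by_cases h : y ∈ S <;> simp [Set.indicator_apply, h]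
      have h2 : (∫ y, ((Set.indicator S (fun _ => (1:ℝ)) y : ℝ) : ℂ) ∂μ) =
          ((∫ y, Set.indicator S (fun _ => (1:ℝ)) y ∂μ : ℝ) : ℂ) := integral_ofReal
      have h3 : ∫ y, Set.indicator S (fun _ => (1:ℝ)) y ∂μ = (μ S).toReal :=
        (integral_indicator_one hSm).trans (measureReal_def _ _)
      have h4 : (∫ y, u y * v y ∂μ) = ((μ S).toReal : ℂ) := by
        rw [integral_congr_ae (Filter.Eventually.of_forall h1), h2, h3]
      exact h4.symm
    have hcontA : Continuous fun y => A (x, y) := A.continuous.comp (hc1 x)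
    have hcontB : Continuous fun y => B (y, z) := B.continuous.comp (hc2 z)
    have hintA : Integrable (fun y => A (x, y)) μ :=
      hcontA.integrable_of_hasCompactSupport (HasCompactSupport.of_compactSpace _)
    have hintB : Integrable (fun y => B (y, z)) μ :=
      hcontB.integrable_of_hasCompactSupport (HasCompactSupport.of_compactSpace _)
    have hintAB : Integrable (fun y => A (x, y) * B (y, z)) μ :=
      (hcontA.mul hcontB).integrable_of_hasCompactSupport (HasCompactSupport.of_compactSpace _)
    have hintuv : Integrable (fun y => u y * v y) μ := by
      rw [show (fun y => u y * v y) = Set.indicator S (fun _ => (1:ℂ)) from funext huv]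
      exact (integrable_const _).indicator hSm
    have hintu : Integrable u μ := by
      have : u = Set.indicator ((fun y => evalChar 𝔄 (x, y)) ⁻¹' W₁) (fun _ => (1:ℂ)) := by
        funext y
        by_cases h : evalChar 𝔄 (x, y) ∈ W₁ <;> simp [hu, Set.indicator_apply, h]
      rw [this]
      exact (integrable_const _).indicator (he1 hW₁)
    have hintv : Integrable v μ := by
      have : v = Set.indicator ((fun y => evalChar 𝔄 (y, z)) ⁻¹' W₂) (fun _ => (1:ℂ)) := by
        funext y
        by_cases h : evalChar 𝔄 (y, z) ∈ W₂ <;> simp [hv, Set.indicator_apply, h]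
      rw [this]
      exact (integrable_const _).indicator (he2 hW₂)
    have hint1 : Integrable (fun y => ‖A (x, y) - u y‖) μ := (hintA.sub hintu).norm
    have hint2 : Integrable (fun y => ‖B (y, z) - v y‖) μ := (hintB.sub hintv).norm
    have hptw : ∀ y, ‖A (x, y) * B (y, z) - u y * v y‖ ≤
        ‖A (x, y) - u y‖ + ‖B (y, z) - v y‖ := by
      intro y
      have hb : ‖B (y, z)‖ ≤ 1 := hBn (y, z)
      have hu1 : ‖u y‖ ≤ 1 := by
        by_cases h : evalChar 𝔄 (x, y) ∈ W₁ <;> simp [hu, Set.indicator_apply, h]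
      calc ‖A (x, y) * B (y, z) - u y * v y‖
          = ‖(A (x, y) - u y) * B (y, z) + u y * (B (y, z) - v y)‖ := by congr 1; ring
        _ ≤ ‖(A (x, y) - u y) * B (y, z)‖ + ‖u y * (B (y, z) - v y)‖ := norm_add_le _ _
        _ = ‖A (x, y) - u y‖ * ‖B (y, z)‖ + ‖u y‖ * ‖B (y, z) - v y‖ := by
            rw [norm_mul, norm_mul]
        _ ≤ ‖A (x, y) - u y‖ * 1 + 1 * ‖B (y, z) - v y‖ :=
            add_le_add (mul_le_mul_of_nonneg_left hb (norm_nonneg _))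
              (mul_le_mul_of_nonneg_right hu1 (norm_nonneg _))
        _ = ‖A (x, y) - u y‖ + ‖B (y, z) - v y‖ := by ring
    have hCval : Cn (x, z) = ∫ y, A (x, y) * B (y, z) ∂μ := by
      rw [← hCeq (x, z)]; rfl
    rw [hCval, hFuv, ← integral_sub hintAB hintuv]
    calc ‖∫ y, (A (x, y) * B (y, z) - u y * v y) ∂μ‖
        ≤ ∫ y, ‖A (x, y) * B (y, z) - u y * v y‖ ∂μ := norm_integral_le_integral_norm _
      _ ≤ ∫ y, (‖A (x, y) - u y‖ + ‖B (y, z) - v y‖) ∂μ :=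
          integral_mono (hintAB.sub hintuv).norm (hint1.add hint2) hptw
      _ = (∫ y, ‖A (x, y) - u y‖ ∂μ) + ∫ y, ‖B (y, z) - v y‖ ∂μ := integral_add hint1 hint2
      _ ≤ 1 / (n + 1) + 1 / (n + 1) := add_le_add (hAb x) (hBb z)
      _ = 2 / (n + 1) := by ring
  choose Cn hCmem hCb using hex
  have hmono : ∀ k l : ℕ, k ≤ l → (2:ℝ) / (l + 1) ≤ 2 / (k + 1) := by
    intro k l hkl
    have hcast : (k:ℝ) + 1 ≤ (l:ℝ) + 1 := by exact_mod_cast Nat.succ_le_succ hkl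
    gcongr
  have htends0 : Filter.Tendsto (fun N : ℕ => (4:ℝ) / (N + 1)) Filter.atTop (nhds 0) := by
    have h := tendsto_one_div_add_atTop_nhds_zero_nat (𝕜 := ℝ)
    have := h.const_mul (4:ℝ)
    simpa [mul_one_div, mul_zero, div_eq_mul_inv] using this
  have hCauchy : CauchySeq Cn := by
    refine cauchySeq_of_le_tendsto_0 (fun N => 4 / (N + 1)) (fun n m N hn hm => ?_) htends0
    refine (ContinuousMap.dist_le (by positivity)).mpr fun p => ?_
    calc dist (Cn n p) (Cn m p) ≤ dist (Cn n p) (F p) + dist (F p) (Cn m p) :=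
          dist_triangle _ _ _
      _ ≤ 2 / (n + 1) + 2 / (m + 1) := by
          rw [dist_eq_norm, dist_comm, dist_eq_norm]
          exact add_le_add (hCb n p) (hCb m p)
      _ ≤ 2 / (N + 1) + 2 / (N + 1) := add_le_add (hmono N n hn) (hmono N m hm)
      _ = 4 / (N + 1) := by ring
  obtain ⟨Cl, hCl⟩ := cauchySeq_tendsto_of_complete hCauchy
  have hClmem : Cl ∈ 𝔄 := hcl.mem_of_tendsto hCl (Filter.Eventually.of_forall hCmem)
  have hClF : ∀ p, Cl p = F p := by
    intro p
    have t1 : Filter.Tendsto (fun n => Cn n p) Filter.atTop (nhds (Cl p)) :=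
      ((continuous_eval_const p).tendsto Cl).comp hCl
    have t2 : Filter.Tendsto (fun n => Cn n p) Filter.atTop (nhds (F p)) := by
      rw [tendsto_iff_norm_sub_tendsto_zero]
      refine squeeze_zero (fun n => norm_nonneg _) (fun n => hCb n p) ?_
      have h := tendsto_one_div_add_atTop_nhds_zero_nat (𝕜 := ℝ)
      have := h.const_mul (2:ℝ)
      simpa [mul_one_div, mul_zero, div_eq_mul_inv] using this
    exact tendsto_nhds_unique t1 t2
  constructor
  · exact ⟨Cl, hClmem, fun x z => hClF (x, z)⟩
  · intro x z x' z' hxz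
    have hCeqv : Cl (x, z) = Cl (x', z') := by
      have h := congrArg Subtype.val hxz
      exact congrFun h ⟨Cl, hClmem⟩
    rw [hClF (x, z), hClF (x', z')] at hCeqv
    simp only [hF] at hCeqv
    have hreal : (μ {y : X | evalChar 𝔄 (x, y) ∈ W₁ ∧ evalChar 𝔄 (y, z) ∈ W₂}).toReal =
        (μ {y : X | evalChar 𝔄 (x', y) ∈ W₁ ∧ evalChar 𝔄 (y, z') ∈ W₂}).toReal := by
      exact_mod_cast hCeqv
    exact (ENNReal.toReal_eq_toReal_iff' (measure_ne_top μ _) (measure_ne_top μ _)).mp hreal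
end
end

section
/- Let G be a compact Hausdorff topological group acting continuously and transitively on a nonempty compact Hausdorff space X, and let μ_X be the G-invariant probability Radon measure on X. Then the quotient map R : X×X → (X×X)/G for the diagonal G-action (g·(x,y) = (g·x, g·y)) is a compact association scheme with respect to μ_X. -/
open MeasureTheory Topology Filter

noncomputable section

variable {X : Type*} {I : Type*}

theorem stmt16 {G : Type*} [Group G] [TopologicalSpace G] [IsTopologicalGroup G]
    [CompactSpace G] [T2Space G]
    [TopologicalSpace X] [CompactSpace X] [T2Space X] [Nonempty X]
    [MulAction G X] [ContinuousSMul G X]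
    (htrans : MulAction.IsPretransitive G X)
    [MeasurableSpace X] [BorelSpace X]
    (μ : Measure X) [IsProbabilityMeasure μ] [μ.Regular]
    (hinv : ∀ g : G, Measure.map (fun x : X => g • x) μ = μ) :
    IsCompactAS μ (Quotient.mk (MulAction.orbitRel G (X × X))) := by
  set R := Quotient.mk (MulAction.orbitRel G (X × X)) with hR
  have hsound : ∀ (g : G) (p : X × X), R (g • p) = R p := fun g p =>
    Quotient.sound (MulAction.mem_orbit p g)
  have hexact : ∀ p q : X × X, R p = R q → ∃ g : G, g • q = p := fun p q h =>
    Quotient.exact h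
  haveI : ProperSMul G (X × X) :=
    ⟨(continuous_fst.smul continuous_snd |>.prodMk continuous_snd).isProperMap⟩
  refine ⟨inferInstance, t2Space_quotient_mulAction_of_properSMul,
    isQuotientMap_quotient_mk', ?_, ?_, ?_⟩
  · obtain ⟨x₀⟩ := ‹Nonempty X›
    refine ⟨R (x₀, x₀), Set.ext fun ⟨a, b⟩ => ?_⟩
    simp only [Set.mem_preimage, Set.mem_singleton_iff, Set.mem_setOf_eq]
    constructor
    · rintro h
      obtain ⟨g, hg⟩ := hexact _ _ h
      have h1 : g • x₀ = a := congrArg Prod.fst hg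
      have h2 : g • x₀ = b := congrArg Prod.snd hg
      exact h1 ▸ h2.symm ▸ rfl
    · rintro (h : a = b)
      obtain ⟨g, hg⟩ := htrans.exists_smul_eq x₀ a
      subst h
      rw [← hg, show ((g • x₀ : X), (g • x₀ : X)) = g • (x₀, x₀) from rfl, hsound]
  · intro W W' hW hW' k
    obtain ⟨⟨x₀, z₀⟩, hk⟩ := Quotient.exists_rep k
    set S₀ : Set X := {y : X | R (x₀, y) ∈ W ∧ R (y, z₀) ∈ W'} with hS₀
    have hmeas : MeasurableSet S₀ := by
      have c1 : Continuous fun y : X => R (x₀, y) :=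
        continuous_quotient_mk'.comp (Continuous.prodMk_right x₀)
      have c2 : Continuous fun y : X => R (y, z₀) :=
        continuous_quotient_mk'.comp (Continuous.prodMk_left z₀)
      have hm1 : @Measurable X _ _ (borel _) (fun y : X => R (x₀, y)) :=
        c1.borel_measurable.mono (le_of_eq BorelSpace.measurable_eq.symm) le_rfl
      have hm2 : @Measurable X _ _ (borel _) (fun y : X => R (y, z₀)) :=
        c2.borel_measurable.mono (le_of_eq BorelSpace.measurable_eq.symm) le_rfl
      exact (hm1 hW).inter (hm2 hW')
    refine ⟨(μ S₀).toNNReal, fun x z hxz => ?_⟩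
    obtain ⟨g, hg⟩ := hexact (x, z) (x₀, z₀) (hxz.trans hk.symm)
    have hx : g • x₀ = x := congrArg Prod.fst hg
    have hz : g • z₀ = z := congrArg Prod.snd hg
    have hset : {y : X | R (x, y) ∈ W ∧ R (y, z) ∈ W'} = (fun y : X => g⁻¹ • y) ⁻¹' S₀ := by
      ext y
      simp only [Set.mem_preimage, hS₀, Set.mem_setOf_eq]
      have e1 : R (x₀, g⁻¹ • y) = R (x, y) := by
        rw [← hsound g (x₀, g⁻¹ • y)]
        congr 1
        simp [Prod.smul_def, hx]
      have e2 : R (g⁻¹ • y, z₀) = R (y, z) := by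
        rw [← hsound g (g⁻¹ • y, z₀)]
        congr 1
        simp [Prod.smul_def, hz]
      rw [e1, e2]
    rw [hset, ← Measure.map_apply (continuous_const_smul (g⁻¹ : G)).measurable hmeas,
      hinv g⁻¹, ENNReal.coe_toNNReal (measure_ne_top μ S₀)]
  · intro i
    obtain ⟨⟨a, b⟩, hi⟩ := Quotient.exists_rep i
    refine ⟨R (b, a), Set.ext fun ⟨x, z⟩ => ?_⟩
    simp only [Set.mem_preimage, Set.mem_singleton_iff, Prod.swap]
    subst hi
    constructor
    · intro h
      obtain ⟨g, hg⟩ := hexact _ _ h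
      have h1 : g • b = x := congrArg Prod.fst hg
      have h2 : g • a = z := congrArg Prod.snd hg
      rw [← h1, ← h2, show ((g • a : X), (g • b : X)) = g • (a, b) from rfl, hsound]
    · intro h
      obtain ⟨g, hg⟩ := hexact _ _ h
      have h1 : g • a = z := congrArg Prod.fst hg
      have h2 : g • b = x := congrArg Prod.snd hg
      rw [← h1, ← h2, show ((g • b : X), (g • a : X)) = g • (b, a) from rfl, hsound]
end
end

section
/- Under hypotheses (T1), (T2) and R(x,y)^⊤ = R(y,x), for all f, g ∈ C(I,ℂ) and all x, z ∈ X one has ((f∘R) ∘ (g∘R))(x,z) = (f*g)(R(x,z)), where f*g(i) := ∫_I (∫_I f d(δ_i * δ_{i'})) · g(i'^⊤) dμ_I(i'); in particular, since f*g ∈ C(I,ℂ), the algebra 𝔄_R = {f ∘ R : f ∈ C(I,ℂ)} is closed under the matrix product. -/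
/-!
Since `R (y, z) = T (R (z, y))`, hypothesis (T2) at the base point `z`, applied to `g ∘ T` and to
`φ = f (R (x, ·))`, turns the `y`-integral of the matrix product into an integral over `I` against
the kernel `κ (z, ·)`; hypothesis (T1) then identifies the inner kernel integral with the
convolution integral of `f` at `(R (x, z), i)`.
-/

open MeasureTheory Topology Filter

noncomputable section

variable {X : Type*} {I : Type*}

section HypergroupConvolution

variable [TopologicalSpace X] [MeasurableSpace X]
  [TopologicalSpace I] [MeasurableSpace I]

/-- The paper's `f * g`, with `conv i i' = δ_i * δ_{i'}` and `T = ⊤`. -/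
def hypergroupConv (conv : I → I → Measure I) (μI : Measure I) (T : I → I) (f g : C(I, ℂ))
    (i : I) : ℂ :=
  ∫ i', (∫ j, f j ∂(conv i i')) * g (T i') ∂μI

variable {μ : Measure X} {μI : Measure I} {R : X × X → I} {κ : X × I → Measure X}
  {T : I → I} {conv : I → I → Measure I}

theorem matProd_comp_eq_integral_kernel (hR : Continuous R) (hT : Continuous T)
    (hTR : ∀ x y : X, T (R (x, y)) = R (y, x))
    (hT2 : ∀ (x : X) (f : C(I, ℂ)) (φ : C(X, ℂ)),
      (∫ i, f i * ∫ y, φ y ∂(κ (x, i)) ∂μI) = ∫ y, f (R (x, y)) * φ y ∂μ)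
    (f g : C(I, ℂ)) (x z : X) :
    matProd μ (fun q => f (R q)) (fun q => g (R q)) (x, z) =
      ∫ i, g (T i) * ∫ y, f (R (x, y)) ∂(κ (z, i)) ∂μI := by
  let φ : C(X, ℂ) := ⟨fun y => f (R (x, y)), by fun_prop⟩
  let gT : C(I, ℂ) := ⟨fun i => g (T i), by fun_prop⟩
  calc matProd μ (fun q => f (R q)) (fun q => g (R q)) (x, z)
      = ∫ y, g (T (R (z, y))) * f (R (x, y)) ∂μ := by
        refine integral_congr_ae (.of_forall fun y => ?_)
        simp only [hTR, mul_comm]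
    _ = ∫ i, g (T i) * ∫ y, f (R (x, y)) ∂(κ (z, i)) ∂μI := (hT2 z gT φ).symm

theorem matProd_comp_eq_hypergroupConv (hR : Continuous R) (hT : Continuous T)
    (hTR : ∀ x y : X, T (R (x, y)) = R (y, x))
    (hT1 : ∀ (i : I) (x z : X) (f : C(I, ℂ)),
      (∫ j, f j ∂(conv (R (x, z)) i)) = ∫ y, f (R (x, y)) ∂(κ (z, i)))
    (hT2 : ∀ (x : X) (f : C(I, ℂ)) (φ : C(X, ℂ)),
      (∫ i, f i * ∫ y, φ y ∂(κ (x, i)) ∂μI) = ∫ y, f (R (x, y)) * φ y ∂μ)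
    (f g : C(I, ℂ)) (p : X × X) :
    matProd μ (fun q => f (R q)) (fun q => g (R q)) p =
      hypergroupConv conv μI T f g (R p) := by
  rw [matProd_comp_eq_integral_kernel hR hT hTR hT2]
  refine integral_congr_ae (.of_forall fun i => ?_)
  simp only [hT1, mul_comm]

end HypergroupConvolution

theorem stmt17_general [TopologicalSpace X]
    [MeasurableSpace X]
    (μ : Measure X)
    [TopologicalSpace I]
    [MeasurableSpace I]
    (R : X × X → I) (hR : Topology.IsQuotientMap R)
    (κ : X × I → Measure X)
    (T : I → I) (hTcont : Continuous T)
    (hTR : ∀ x y : X, T (R (x, y)) = R (y, x))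
    (conv : I → I → Measure I)
    (μI : Measure I)
    (hconvCont : ∀ f g : C(I, ℂ),
      Continuous fun i : I => ∫ i', (∫ j, f j ∂(conv i i')) * g (T i') ∂μI)
    (hT1 : ∀ (i : I) (x z : X) (f : C(I, ℂ)),
      (∫ j, f j ∂(conv (R (x, z)) i)) = ∫ y, f (R (x, y)) ∂(κ (z, i)))
    (hT2 : ∀ (x : X) (f : C(I, ℂ)) (φ : C(X, ℂ)),
      (∫ i, f i * ∫ y, φ y ∂(κ (x, i)) ∂μI) = ∫ y, f (R (x, y)) * φ y ∂μ) :
    (∀ (f g : C(I, ℂ)) (x z : X),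
      matProd μ (fun q => f (R q)) (fun q => g (R q)) (x, z) =
        ∫ i', (∫ j, f j ∂(conv (R (x, z)) i')) * g (T i') ∂μI) ∧
    ∀ f g : C(I, ℂ), ∃ h : C(I, ℂ), ∀ p : X × X,
      matProd μ (fun q => f (R q)) (fun q => g (R q)) p = h (R p) := by
  have key := matProd_comp_eq_hypergroupConv hR.continuous hTcont hTR hT1 hT2
  exact ⟨fun f g x z => key f g (x, z),
    fun f g => ⟨⟨hypergroupConv conv μI T f g, hconvCont f g⟩, key f g⟩⟩

theorem stmt17 [TopologicalSpace X] [CompactSpace X] [T2Space X] [Nonempty X]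
    [MeasurableSpace X] [BorelSpace X]
    (μ : Measure X) [IsFiniteMeasure μ] [μ.Regular] [μ.IsOpenPosMeasure]
    [TopologicalSpace I] [CompactSpace I] [T2Space I] [Nonempty I]
    [MeasurableSpace I] [BorelSpace I]
    (R : X × X → I) (hR : Topology.IsQuotientMap R)
    (κ : X × I → Measure X) (hκ : ∀ p : X × I, IsProbabilityMeasure (κ p))
    (T : I → I) (hTcont : Continuous T) (hTinv : ∀ i : I, T (T i) = i)
    (hTR : ∀ x y : X, T (R (x, y)) = R (y, x))
    (conv : I → I → Measure I) (hconv : ∀ i i' : I, IsProbabilityMeasure (conv i i'))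
    (μI : Measure I) [IsFiniteMeasure μI] [μI.Regular]
    (hconvCont : ∀ f g : C(I, ℂ),
      Continuous fun i : I => ∫ i', (∫ j, f j ∂(conv i i')) * g (T i') ∂μI)
    (hT1 : ∀ (i : I) (x z : X) (f : C(I, ℂ)),
      (∫ j, f j ∂(conv (R (x, z)) i)) = ∫ y, f (R (x, y)) ∂(κ (z, i)))
    (hT2 : ∀ (x : X) (f : C(I, ℂ)) (φ : C(X, ℂ)),
      (∫ i, f i * ∫ y, φ y ∂(κ (x, i)) ∂μI) = ∫ y, f (R (x, y)) * φ y ∂μ) :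
    (∀ (f g : C(I, ℂ)) (x z : X),
      matProd μ (fun q => f (R q)) (fun q => g (R q)) (x, z) =
        ∫ i', (∫ j, f j ∂(conv (R (x, z)) i')) * g (T i') ∂μI) ∧
    ∀ f g : C(I, ℂ), ∃ h : C(I, ℂ), ∀ p : X × X,
      matProd μ (fun q => f (R q)) (fun q => g (R q)) p = h (R p) :=
  stmt17_general μ R hR κ T hTcont hTR conv μI hconvCont hT1 hT2
end
end

section
/- Under hypotheses (T1), (T2), R(x,y)^⊤ = R(y,x), invariance of μ_I under the involution (the pushforward of μ_I under ⊤ equals μ_I), the anti-automorphism law (the pushforward of δ_i * δ_{i'} under ⊤ equals δ_{i'^⊤} * δ_{i^⊤} for all i, i' ∈ I), and commutativity of the convolution (δ_i * δ_{i'} = δ_{i'} * δ_i for all i, i' ∈ I), one has (f∘R) ∘ (g∘R) = (g∘R) ∘ (f∘R) for all f, g ∈ C(I,ℂ). -/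
/-!
Both products are rewritten as integrals over `I` by first applying (T2) and then (T1) to the
inner integral over `κ`: `((f∘R) ∘ (g∘R))(x,z) = ∫ f(i) ∫ g(j^⊤) d(δ_{R(z,x)} * δ_i)(j) dμ_I(i)`.
Transposing the product, `((g∘R) ∘ (f∘R))(x,z)` is the same expression for `f∘⊤`, `g∘⊤` at
`(z,x)`. The two integrals are then matched by the change of variables `i ↦ i^⊤` in `μ_I`,
since by the anti-automorphism law and commutativity
`δ_{R(x,z)} * δ_{i^⊤}` is the image of `δ_{R(z,x)} * δ_i` under `⊤`.
-/

open MeasureTheory Topology Filter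

noncomputable section

variable {X : Type*} {I : Type*}

theorem matProd_apply_swap [MeasurableSpace X] (μ : Measure X) (A B : X × X → ℂ) (x z : X) :
    matProd μ A B (x, z) = matProd μ (B ∘ Prod.swap) (A ∘ Prod.swap) (z, x) := by
  simp only [matProd, Function.comp_apply, Prod.swap_prod_mk, mul_comm]

theorem integral_map_involutive {E : Type*} [NormedAddCommGroup E] [NormedSpace ℝ E]
    [MeasurableSpace I] {T : I → I} (hT : Measurable T) (hTinv : Function.Involutive T)
    (ν : Measure I) (h : I → E) :
    ∫ j, h j ∂(ν.map T) = ∫ j, h (T j) ∂ν :=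
  integral_map_equiv (MeasurableEquiv.ofInvolutive T hTinv hT) h

theorem map_conv_eq_conv_of_involutive [MeasurableSpace I] {T : I → I}
    (hTinv : Function.Involutive T) {conv : I → I → Measure I}
    (hanti : ∀ i i' : I, (conv i i').map T = conv (T i') (T i))
    (hcomm : ∀ i i' : I, conv i i' = conv i' i) (a i : I) :
    (conv (T a) i).map T = conv a (T i) := by
  rw [hanti, hTinv, hcomm]

theorem integral_mul_integral_conv_comp_involutive [MeasurableSpace I] {T : I → I}
    (hT : Measurable T) (hTinv : Function.Involutive T) {μI : Measure I}
    (hμI : μI.map T = μI) {conv : I → I → Measure I}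
    (hanti : ∀ i i' : I, (conv i i').map T = conv (T i') (T i))
    (hcomm : ∀ i i' : I, conv i i' = conv i' i) (f g : I → ℂ) (a : I) :
    ∫ i, f (T i) * ∫ j, g j ∂(conv a i) ∂μI =
      ∫ i, f i * ∫ j, g (T j) ∂(conv (T a) i) ∂μI := by
  conv_lhs => rw [← hμI, integral_map_involutive hT hTinv]
  simp only [hTinv _, ← map_conv_eq_conv_of_involutive hTinv hanti hcomm a,
    integral_map_involutive hT hTinv]

section Hypergroup

variable [TopologicalSpace X] [MeasurableSpace X] [TopologicalSpace I] [MeasurableSpace I]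
  {μ : Measure X} {R : X × X → I} {κ : X × I → Measure X} {T : I → I}
  {conv : I → I → Measure I} {μI : Measure I}

theorem matProd_comp_eq_integral_conv (hR : Continuous R) (hT : Continuous T)
    (hTR : ∀ x y : X, T (R (x, y)) = R (y, x))
    (hT1 : ∀ (i : I) (x z : X) (f : C(I, ℂ)),
      (∫ j, f j ∂(conv (R (x, z)) i)) = ∫ y, f (R (x, y)) ∂(κ (z, i)))
    (hT2 : ∀ (x : X) (f : C(I, ℂ)) (φ : C(X, ℂ)),
      (∫ i, f i * ∫ y, φ y ∂(κ (x, i)) ∂μI) = ∫ y, f (R (x, y)) * φ y ∂μ)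
    (f g : C(I, ℂ)) (x z : X) :
    matProd μ (fun q => f (R q)) (fun q => g (R q)) (x, z) =
      ∫ i, f i * ∫ j, g (T j) ∂(conv (R (z, x)) i) ∂μI := by
  let φ : C(X, ℂ) := g.comp ⟨fun y => R (y, z), by fun_prop⟩
  have hinner (i : I) : ∫ y, φ y ∂(κ (x, i)) = ∫ j, g (T j) ∂(conv (R (z, x)) i) := by
    simpa [φ, hTR] using (hT1 i z x (g.comp ⟨T, hT⟩)).symm
  change ∫ y, f (R (x, y)) * φ y ∂μ = _
  simp only [← hT2, hinner]

end Hypergroup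

theorem stmt18_general [TopologicalSpace X] [MeasurableSpace X] (μ : Measure X)
    [TopologicalSpace I] [MeasurableSpace I] [BorelSpace I]
    (R : X × X → I) (hR : Topology.IsQuotientMap R)
    (κ : X × I → Measure X)
    (T : I → I) (hTcont : Continuous T) (hTinv : ∀ i : I, T (T i) = i)
    (hTR : ∀ x y : X, T (R (x, y)) = R (y, x))
    (conv : I → I → Measure I) (μI : Measure I)
    (hT1 : ∀ (i : I) (x z : X) (f : C(I, ℂ)),
      (∫ j, f j ∂(conv (R (x, z)) i)) = ∫ y, f (R (x, y)) ∂(κ (z, i)))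
    (hT2 : ∀ (x : X) (f : C(I, ℂ)) (φ : C(X, ℂ)),
      (∫ i, f i * ∫ y, φ y ∂(κ (x, i)) ∂μI) = ∫ y, f (R (x, y)) * φ y ∂μ)
    (hμIinv : Measure.map T μI = μI)
    (hanti : ∀ i i' : I, Measure.map T (conv i i') = conv (T i') (T i))
    (hcomm : ∀ i i' : I, conv i i' = conv i' i) :
    ∀ f g : C(I, ℂ),
      matProd μ (fun q => f (R q)) (fun q => g (R q)) =
        matProd μ (fun q => g (R q)) (fun q => f (R q)) := by
  intro f g
  funext ⟨x, z⟩
  have hRc := hR.continuous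
  let Tc : C(I, I) := ⟨T, hTcont⟩
  have htranspose : matProd μ (fun q => g (R q)) (fun q => f (R q)) (x, z) =
      matProd μ (fun q => f.comp Tc (R q)) (fun q => g.comp Tc (R q)) (z, x) := by
    rw [matProd_apply_swap]
    simp [Tc, Function.comp_def, Prod.swap, hTR]
  calc matProd μ (fun q => f (R q)) (fun q => g (R q)) (x, z)
      = ∫ i, f i * ∫ j, g (T j) ∂(conv (R (z, x)) i) ∂μI :=
        matProd_comp_eq_integral_conv hRc hTcont hTR hT1 hT2 f g x z
    _ = ∫ i, f (T i) * ∫ j, g j ∂(conv (R (x, z)) i) ∂μI := by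
        rw [integral_mul_integral_conv_comp_involutive hTcont.measurable hTinv hμIinv hanti hcomm,
          hTR]
    _ = matProd μ (fun q => g (R q)) (fun q => f (R q)) (x, z) := by
        rw [htranspose, matProd_comp_eq_integral_conv hRc hTcont hTR hT1 hT2]
        simp only [Tc, ContinuousMap.comp_apply, ContinuousMap.coe_mk, hTinv]

theorem stmt18 [TopologicalSpace X] [CompactSpace X] [T2Space X] [Nonempty X]
    [MeasurableSpace X] [BorelSpace X]
    (μ : Measure X) [IsFiniteMeasure μ] [μ.Regular] [μ.IsOpenPosMeasure]
    [TopologicalSpace I] [CompactSpace I] [T2Space I] [Nonempty I]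
    [MeasurableSpace I] [BorelSpace I]
    (R : X × X → I) (hR : Topology.IsQuotientMap R)
    (κ : X × I → Measure X) (hκ : ∀ p : X × I, IsProbabilityMeasure (κ p))
    (T : I → I) (hTcont : Continuous T) (hTinv : ∀ i : I, T (T i) = i)
    (hTR : ∀ x y : X, T (R (x, y)) = R (y, x))
    (conv : I → I → Measure I) (hconv : ∀ i i' : I, IsProbabilityMeasure (conv i i'))
    (μI : Measure I) [IsFiniteMeasure μI] [μI.Regular]
    (hconvCont : ∀ f g : C(I, ℂ),
      Continuous fun i : I => ∫ i', (∫ j, f j ∂(conv i i')) * g (T i') ∂μI)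
    (hT1 : ∀ (i : I) (x z : X) (f : C(I, ℂ)),
      (∫ j, f j ∂(conv (R (x, z)) i)) = ∫ y, f (R (x, y)) ∂(κ (z, i)))
    (hT2 : ∀ (x : X) (f : C(I, ℂ)) (φ : C(X, ℂ)),
      (∫ i, f i * ∫ y, φ y ∂(κ (x, i)) ∂μI) = ∫ y, f (R (x, y)) * φ y ∂μ)
    (hμIinv : Measure.map T μI = μI)
    (hanti : ∀ i i' : I, Measure.map T (conv i i') = conv (T i') (T i))
    (hcomm : ∀ i i' : I, conv i i' = conv i' i) :
    ∀ f g : C(I, ℂ),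
      matProd μ (fun q => f (R q)) (fun q => g (R q)) =
        matProd μ (fun q => g (R q)) (fun q => f (R q)) :=
  stmt18_general μ R hR κ T hTcont hTinv hTR conv μI hT1 hT2 hμIinv hanti hcomm
end
end

section
/- Suppose in addition to (T1), (T2), R(x,y)^⊤ = R(y,x) and the continuity of convolutions, there exists i₀ ∈ I such that κ(x,i₀) is the Dirac measure δ_x for every x ∈ X, and R⁻¹(i₀) = Δ_X. Then R : X×X → I is a compact association scheme. Moreover, if the convolution is commutative (δ_i * δ_{i'} = δ_{i'} * δ_i for all i, i'), μ_I is invariant under ⊤, and the anti-automorphism law holds (the pushforward of δ_i * δ_{i'} under ⊤ equals δ_{i'^⊤} * δ_{i^⊤}), then R is commutative; and if i^⊤ = i for all i ∈ I, then R is symmetric. -/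
open MeasureTheory Topology Filter

noncomputable section


variable {X : Type*} {I : Type*}

/-- Lower bound: measure of preimage of a rectangle by an indicator-dominated product. -/
lemma casIntLower [TopologicalSpace X] [CompactSpace X] [T2Space X]
    [MeasurableSpace X] [BorelSpace X]
    (μ : Measure X) [IsFiniteMeasure μ]
    [TopologicalSpace I] [MeasurableSpace I] [BorelSpace I]
    (F : X → I × I) (hF : Continuous F) (f g : C(I, ℝ))
    (hf : ∀ i, f i ∈ Set.Icc (0:ℝ) 1) (hg : ∀ i, g i ∈ Set.Icc (0:ℝ) 1)
    {K K' : Set I} (hK : MeasurableSet K) (hK' : MeasurableSet K')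
    (hfK : ∀ i ∈ K, f i = 1) (hgK' : ∀ i ∈ K', g i = 1) :
    (μ (F ⁻¹' (K ×ˢ K'))).toReal ≤ ∫ y, f (F y).1 * g (F y).2 ∂μ := by
  have hcont : Continuous fun y => f (F y).1 * g (F y).2 :=
    (f.continuous.comp (continuous_fst.comp hF)).mul
      (g.continuous.comp (continuous_snd.comp hF))
  have hint : Integrable (fun y => f (F y).1 * g (F y).2) μ :=
    hcont.integrable_of_hasCompactSupport (HasCompactSupport.of_compactSpace _)
  have hmeas : MeasurableSet (F ⁻¹' (K ×ˢ K')) :=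
    (hK.preimage (continuous_fst.comp hF).measurable).inter
      (hK'.preimage (continuous_snd.comp hF).measurable)
  have hind : Integrable ((F ⁻¹' (K ×ˢ K')).indicator fun _ => (1:ℝ)) μ :=
    (integrable_const (1:ℝ)).indicator hmeas
  have h1 : (μ (F ⁻¹' (K ×ˢ K'))).toReal
      = ∫ y, (F ⁻¹' (K ×ˢ K')).indicator (fun _ => (1:ℝ)) y ∂μ := by
    rw [integral_indicator_const (1:ℝ) hmeas, smul_eq_mul, mul_one]; rfl
  rw [h1]
  refine integral_mono hind hint ?_
  intro y
  show (F ⁻¹' (K ×ˢ K')).indicator (fun _ => (1:ℝ)) y ≤ f (F y).1 * g (F y).2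
  by_cases hy : y ∈ F ⁻¹' (K ×ˢ K')
  · rw [Set.indicator_of_mem hy]
    have h1 : f (F y).1 = 1 := hfK _ hy.1
    have h2 : g (F y).2 = 1 := hgK' _ hy.2
    rw [h1, h2, mul_one]
  · rw [Set.indicator_of_notMem hy]
    exact mul_nonneg (hf _).1 (hg _).1

/-- Upper bound: product dominated by indicator of an open rectangle preimage. -/
lemma casIntUpper [TopologicalSpace X] [CompactSpace X] [T2Space X]
    [MeasurableSpace X] [BorelSpace X]
    (μ : Measure X) [IsFiniteMeasure μ]
    [TopologicalSpace I] [MeasurableSpace I] [BorelSpace I]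
    (F : X → I × I) (hF : Continuous F) (f g : C(I, ℝ))
    (hf : ∀ i, f i ∈ Set.Icc (0:ℝ) 1) (hg : ∀ i, g i ∈ Set.Icc (0:ℝ) 1)
    {U U' : Set I} (hU : MeasurableSet U) (hU' : MeasurableSet U')
    (hfU : ∀ i ∉ U, f i = 0) (hgU' : ∀ i ∉ U', g i = 0) :
    ∫ y, f (F y).1 * g (F y).2 ∂μ ≤ (μ (F ⁻¹' (U ×ˢ U'))).toReal := by
  have hcont : Continuous fun y => f (F y).1 * g (F y).2 :=
    (f.continuous.comp (continuous_fst.comp hF)).mul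
      (g.continuous.comp (continuous_snd.comp hF))
  have hint : Integrable (fun y => f (F y).1 * g (F y).2) μ :=
    hcont.integrable_of_hasCompactSupport (HasCompactSupport.of_compactSpace _)
  have hmeas : MeasurableSet (F ⁻¹' (U ×ˢ U')) :=
    (hU.preimage (continuous_fst.comp hF).measurable).inter
      (hU'.preimage (continuous_snd.comp hF).measurable)
  have hind : Integrable ((F ⁻¹' (U ×ˢ U')).indicator fun _ => (1:ℝ)) μ :=
    (integrable_const (1:ℝ)).indicator hmeas
  have h1 : (μ (F ⁻¹' (U ×ˢ U'))).toReal
      = ∫ y, (F ⁻¹' (U ×ˢ U')).indicator (fun _ => (1:ℝ)) y ∂μ := by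
    rw [integral_indicator_const (1:ℝ) hmeas, smul_eq_mul, mul_one]; rfl
  rw [h1]
  refine integral_mono hint hind ?_
  intro y
  show f (F y).1 * g (F y).2 ≤ (F ⁻¹' (U ×ˢ U')).indicator (fun _ => (1:ℝ)) y
  by_cases hy : y ∈ F ⁻¹' (U ×ˢ U')
  · rw [Set.indicator_of_mem hy]
    calc f (F y).1 * g (F y).2 ≤ 1 * 1 :=
          mul_le_mul (hf _).2 (hg _).2 (hg _).1 zero_le_one
      _ = 1 := one_mul 1
  · rw [Set.indicator_of_notMem hy]
    rcases not_and_or.mp hy with h | h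
    · rw [hfU _ h, zero_mul]
    · rw [hgU' _ h, mul_zero]

/-- One-sided comparison of measures of rectangle preimages based on equality of
integrals of products of continuous functions. -/
lemma casLE [TopologicalSpace X] [CompactSpace X] [T2Space X]
    [MeasurableSpace X] [BorelSpace X]
    (μ : Measure X) [IsFiniteMeasure μ] [μ.Regular]
    [TopologicalSpace I] [CompactSpace I] [T2Space I]
    [MeasurableSpace I] [BorelSpace I]
    (F₁ F₂ : X → I × I) (hF₁ : Continuous F₁) (hF₂ : Continuous F₂)
    (H : ∀ f g : C(I, ℝ), (∀ i, f i ∈ Set.Icc (0:ℝ) 1) → (∀ i, g i ∈ Set.Icc (0:ℝ) 1) →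
      ∫ y, f (F₁ y).1 * g (F₁ y).2 ∂μ = ∫ y, f (F₂ y).1 * g (F₂ y).2 ∂μ)
    {W W' : Set I} (hW : MeasurableSet W) (hW' : MeasurableSet W') :
    μ (F₁ ⁻¹' (W ×ˢ W')) ≤ μ (F₂ ⁻¹' (W ×ˢ W')) := by
  -- Step 0: the compact-rectangle comparison
  have key : ∀ K K' : Set I, IsCompact K → IsCompact K' →
      μ (F₁ ⁻¹' (K ×ˢ K')) ≤ μ (F₂ ⁻¹' (W ×ˢ W')) ∨ True := fun _ _ _ _ => Or.inr trivial
  -- main inner-regularity argument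
  refine le_of_forall_lt fun r hr => ?_
  have hA₁ : MeasurableSet (F₁ ⁻¹' (W ×ˢ W')) :=
    (hW.preimage (continuous_fst.comp hF₁).measurable).inter
      (hW'.preimage (continuous_snd.comp hF₁).measurable)
  obtain ⟨C, hCA, hCcl, hrC⟩ :=
    hA₁.exists_lt_isClosed_of_ne_top (measure_ne_top μ _) hr
  have hCcomp : IsCompact C := hCcl.isCompact
  set K : Set I := (fun y => (F₁ y).1) '' C with hKdef
  set K' : Set I := (fun y => (F₁ y).2) '' C with hK'def
  have hKcomp : IsCompact K := hCcomp.image (continuous_fst.comp hF₁)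
  have hK'comp : IsCompact K' := hCcomp.image (continuous_snd.comp hF₁)
  have hKW : K ⊆ W := by rintro _ ⟨y, hy, rfl⟩; exact (hCA hy).1
  have hK'W' : K' ⊆ W' := by rintro _ ⟨y, hy, rfl⟩; exact (hCA hy).2
  have hCK : C ⊆ F₁ ⁻¹' (K ×ˢ K') := fun y hy => ⟨⟨y, hy, rfl⟩, ⟨y, hy, rfl⟩⟩
  -- compare compact rectangles
  have hcmp : μ (F₁ ⁻¹' (K ×ˢ K')) ≤ μ (F₂ ⁻¹' (W ×ˢ W')) := by
    refine ENNReal.le_of_forall_pos_le_add fun ε hε hfin => ?_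
    set C₂ : Set X := F₂ ⁻¹' (K ×ˢ K') with hC₂def
    have hC₂cl : IsClosed C₂ :=
      ((hKcomp.isClosed.prod hK'comp.isClosed)).preimage hF₂
    have hC₂W : C₂ ⊆ F₂ ⁻¹' (W ×ˢ W') := fun y hy => ⟨hKW hy.1, hK'W' hy.2⟩
    obtain ⟨V, hC₂V, hVopen, hV⟩ :=
      C₂.exists_isOpen_lt_add (measure_ne_top μ _) (by exact_mod_cast hε.ne' : (ε : ENNReal) ≠ 0)
    set D : Set (I × I) := F₂ '' Vᶜ with hDdef
    have hDcomp : IsCompact D := (hVopen.isClosed_compl.isCompact).image hF₂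
    have hKKD : K ×ˢ K' ⊆ Dᶜ := by
      rintro p hp ⟨y, hyV, rfl⟩
      exact hyV (hC₂V hp)
    obtain ⟨U, U', hUopen, hU'open, hKU, hK'U', hUU'D⟩ :=
      generalized_tube_lemma hKcomp hK'comp hDcomp.isClosed.isOpen_compl hKKD
    have hUV : F₂ ⁻¹' (U ×ˢ U') ⊆ V := by
      intro y hy
      by_contra hyV
      exact hUU'D hy ⟨y, hyV, rfl⟩
    -- Urysohn functions
    obtain ⟨f, hf0, hf1, hfI⟩ :=
      exists_continuous_zero_one_of_isClosed hUopen.isClosed_compl hKcomp.isClosed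
        (by rw [Set.disjoint_compl_left_iff_subset]; exact hKU)
    obtain ⟨g, hg0, hg1, hgI⟩ :=
      exists_continuous_zero_one_of_isClosed hU'open.isClosed_compl hK'comp.isClosed
        (by rw [Set.disjoint_compl_left_iff_subset]; exact hK'U')
    have step1 : (μ (F₁ ⁻¹' (K ×ˢ K'))).toReal ≤ ∫ y, f (F₁ y).1 * g (F₁ y).2 ∂μ :=
      casIntLower μ F₁ hF₁ f g hfI hgI hKcomp.measurableSet hK'comp.measurableSet
        (fun i hi => hf1 hi) (fun i hi => hg1 hi)
    have step2 : ∫ y, f (F₂ y).1 * g (F₂ y).2 ∂μ ≤ (μ (F₂ ⁻¹' (U ×ˢ U'))).toReal :=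
      casIntUpper μ F₂ hF₂ f g hfI hgI hUopen.measurableSet hU'open.measurableSet
        (fun i hi => hf0 hi) (fun i hi => hg0 hi)
    have chain : (μ (F₁ ⁻¹' (K ×ˢ K'))).toReal
        ≤ (μ (F₂ ⁻¹' (W ×ˢ W')) + ε).toReal := by
      calc (μ (F₁ ⁻¹' (K ×ˢ K'))).toReal
          ≤ ∫ y, f (F₁ y).1 * g (F₁ y).2 ∂μ := step1
        _ = ∫ y, f (F₂ y).1 * g (F₂ y).2 ∂μ := H f g hfI hgI
        _ ≤ (μ (F₂ ⁻¹' (U ×ˢ U'))).toReal := step2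
        _ ≤ (μ V).toReal := ENNReal.toReal_mono (measure_ne_top μ _) (measure_mono hUV)
        _ ≤ (μ C₂ + ε).toReal := ENNReal.toReal_mono
            (by simp [measure_ne_top μ, ENNReal.coe_ne_top, ENNReal.add_ne_top]) hV.le
        _ ≤ (μ (F₂ ⁻¹' (W ×ˢ W')) + ε).toReal := ENNReal.toReal_mono
            (by simp [measure_ne_top μ, ENNReal.add_ne_top])
            (add_le_add_left (measure_mono hC₂W) _)
    exact (ENNReal.toReal_le_toReal (measure_ne_top μ _)
      (by simp [measure_ne_top μ, ENNReal.add_ne_top])).mp chain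
  exact lt_of_lt_of_le (lt_of_lt_of_le hrC (measure_mono hCK)) hcmp

lemma casEq [TopologicalSpace X] [CompactSpace X] [T2Space X]
    [MeasurableSpace X] [BorelSpace X]
    (μ : Measure X) [IsFiniteMeasure μ] [μ.Regular]
    [TopologicalSpace I] [CompactSpace I] [T2Space I]
    [MeasurableSpace I] [BorelSpace I]
    (F₁ F₂ : X → I × I) (hF₁ : Continuous F₁) (hF₂ : Continuous F₂)
    (H : ∀ f g : C(I, ℝ), (∀ i, f i ∈ Set.Icc (0:ℝ) 1) → (∀ i, g i ∈ Set.Icc (0:ℝ) 1) →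
      ∫ y, f (F₁ y).1 * g (F₁ y).2 ∂μ = ∫ y, f (F₂ y).1 * g (F₂ y).2 ∂μ)
    {W W' : Set I} (hW : MeasurableSet W) (hW' : MeasurableSet W') :
    μ (F₁ ⁻¹' (W ×ˢ W')) = μ (F₂ ⁻¹' (W ×ˢ W')) :=
  le_antisymm (casLE μ F₁ F₂ hF₁ hF₂ H hW hW')
    (casLE μ F₂ F₁ hF₂ hF₁ (fun f g hf hg => (H f g hf hg).symm) hW hW')



/-- Coercion of a real continuous map to a complex one. -/
def casCplx {I : Type*} [TopologicalSpace I] (f : C(I, ℝ)) : C(I, ℂ) :=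
  ⟨fun i => (f i : ℂ), Complex.continuous_ofReal.comp f.continuous⟩

@[simp] lemma casCplx_apply {I : Type*} [TopologicalSpace I] (f : C(I, ℝ)) (i : I) :
    casCplx f i = (f i : ℂ) := rfl



theorem stmt19 [TopologicalSpace X] [CompactSpace X] [T2Space X] [Nonempty X]
    [MeasurableSpace X] [BorelSpace X]
    (μ : Measure X) [IsFiniteMeasure μ] [μ.Regular] [μ.IsOpenPosMeasure]
    [TopologicalSpace I] [CompactSpace I] [T2Space I] [Nonempty I]
    [MeasurableSpace I] [BorelSpace I]
    (R : X × X → I) (hR : Topology.IsQuotientMap R)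
    (κ : X × I → Measure X) (hκ : ∀ p : X × I, IsProbabilityMeasure (κ p))
    (T : I → I) (hTcont : Continuous T) (hTinv : ∀ i : I, T (T i) = i)
    (hTR : ∀ x y : X, T (R (x, y)) = R (y, x))
    (conv : I → I → Measure I) (hconv : ∀ i i' : I, IsProbabilityMeasure (conv i i'))
    (μI : Measure I) [IsFiniteMeasure μI] [μI.Regular]
    (hconvCont : ∀ f g : C(I, ℂ),
      Continuous fun i : I => ∫ i', (∫ j, f j ∂(conv i i')) * g (T i') ∂μI)
    (hT1 : ∀ (i : I) (x z : X) (f : C(I, ℂ)),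
      (∫ j, f j ∂(conv (R (x, z)) i)) = ∫ y, f (R (x, y)) ∂(κ (z, i)))
    (hT2 : ∀ (x : X) (f : C(I, ℂ)) (φ : C(X, ℂ)),
      (∫ i, f i * ∫ y, φ y ∂(κ (x, i)) ∂μI) = ∫ y, f (R (x, y)) * φ y ∂μ)
    (i₀ : I) (hκ₀ : ∀ x : X, κ (x, i₀) = Measure.dirac x)
    (hi₀ : R ⁻¹' {i₀} = {p : X × X | p.1 = p.2}) :
    IsCompactAS μ R ∧
      (((∀ i i' : I, conv i i' = conv i' i) ∧ Measure.map T μI = μI ∧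
          (∀ i i' : I, Measure.map T (conv i i') = conv (T i') (T i))) →
        CASComm μ R) ∧
      ((∀ i : I, T i = i) → CASSymm R) := by
  have hRc : Continuous R := hR.continuous
  have hWb : ∀ {W : Set I}, MeasurableSet[borel I] W → MeasurableSet W := by
    intro W h
    rw [BorelSpace.measurable_eq (α := I)]
    exact h
  have hGc : ∀ x z : X, Continuous fun y => (R (x, y), R (y, z)) := fun x z =>
    (hRc.comp (Continuous.prodMk_right x)).prodMk
      (hRc.comp (continuous_id.prodMk continuous_const))
  -- first "convolution formula"
  have CF1 : ∀ (x z : X) (f g : C(I, ℂ)),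
      ∫ y, f (R (x, y)) * g (R (y, z)) ∂μ
        = ∫ i, g (T i) * ∫ j, f j ∂(conv (R (x, z)) i) ∂μI := by
    intro x z f g
    have hφc : Continuous fun y => f (R (x, y)) :=
      f.continuous.comp (hRc.comp (Continuous.prodMk_right x))
    have h2 := hT2 z (g.comp ⟨T, hTcont⟩) ⟨fun y => f (R (x, y)), hφc⟩
    simp only [ContinuousMap.comp_apply, ContinuousMap.coe_mk] at h2
    calc ∫ y, f (R (x, y)) * g (R (y, z)) ∂μ
        = ∫ y, g (T (R (z, y))) * f (R (x, y)) ∂μ := by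
          refine integral_congr_ae (ae_of_all _ fun y => ?_)
          simp only []
          rw [hTR z y, mul_comm]
      _ = ∫ i, g (T i) * ∫ y, f (R (x, y)) ∂(κ (z, i)) ∂μI := h2.symm
      _ = ∫ i, g (T i) * ∫ j, f j ∂(conv (R (x, z)) i) ∂μI := by
          refine integral_congr_ae (ae_of_all _ fun i => ?_)
          simp only []
          rw [hT1 i x z f]
  -- second "convolution formula"
  have CF2 : ∀ (x z : X) (f g : C(I, ℂ)),
      ∫ y, f (R (x, y)) * g (R (y, z)) ∂μ
        = ∫ i, f i * ∫ j, g (T j) ∂(conv (R (z, x)) i) ∂μI := by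
    intro x z f g
    have hφc : Continuous fun y => g (R (y, z)) :=
      g.continuous.comp (hRc.comp (continuous_id.prodMk continuous_const))
    have h2 := hT2 x f ⟨fun y => g (R (y, z)), hφc⟩
    simp only [ContinuousMap.coe_mk] at h2
    rw [← h2]
    refine integral_congr_ae (ae_of_all _ fun i => ?_)
    simp only []
    congr 1
    have h1 := hT1 i z x (g.comp ⟨T, hTcont⟩)
    simp only [ContinuousMap.comp_apply, ContinuousMap.coe_mk] at h1
    rw [h1]
    refine integral_congr_ae (ae_of_all _ fun y => ?_)
    simp only []
    rw [hTR z y]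
  have lemA : ∀ (x z x' z' : X), R (x, z) = R (x', z') → ∀ f g : C(I, ℂ),
      ∫ y, f (R (x, y)) * g (R (y, z)) ∂μ
        = ∫ y, f (R (x', y)) * g (R (y, z')) ∂μ := by
    intro x z x' z' h f g
    rw [CF2 x z f g, CF2 x' z' f g]
    have hzz : R (z, x) = R (z', x') := by rw [← hTR x z, ← hTR x' z', h]
    rw [hzz]
  have castInt : ∀ (a b : X → I) (f g : C(I, ℝ)),
      ∫ y, ((f (a y) : ℂ)) * ((g (b y) : ℂ)) ∂μ
        = ((∫ y, f (a y) * g (b y) ∂μ : ℝ) : ℂ) := by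
    intro a b f g
    norm_cast
  have realA : ∀ (x z x' z' : X), R (x, z) = R (x', z') → ∀ f g : C(I, ℝ),
      ∫ y, f (R (x, y)) * g (R (y, z)) ∂μ
        = ∫ y, f (R (x', y)) * g (R (y, z')) ∂μ := by
    intro x z x' z' h f g
    have h0 := lemA x z x' z' h (casCplx f) (casCplx g)
    simp only [casCplx_apply] at h0
    rw [castInt (fun y => R (x, y)) (fun y => R (y, z)) f g,
        castInt (fun y => R (x', y)) (fun y => R (y, z')) f g] at h0
    exact_mod_cast h0
  refine ⟨⟨inferInstance, inferInstance, hR, ⟨i₀, hi₀⟩, ?_, ?_⟩, ?_, ?_⟩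
  · -- (CAS2)
    intro W W' hW hW' k
    obtain ⟨⟨x₀, z₀⟩, hx₀⟩ := hR.surjective k
    refine ⟨(μ ((fun y => (R (x₀, y), R (y, z₀))) ⁻¹' (W ×ˢ W'))).toNNReal, ?_⟩
    intro x z hxz
    have hset : {y : X | R (x, y) ∈ W ∧ R (y, z) ∈ W'}
        = (fun y => (R (x, y), R (y, z))) ⁻¹' (W ×ˢ W') := rfl
    rw [hset, casEq μ _ _ (hGc x z) (hGc x₀ z₀)
        (fun f g _ _ => realA x z x₀ z₀ (by rw [hxz, hx₀]) f g) (hWb hW) (hWb hW'),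
      ENNReal.coe_toNNReal (measure_ne_top μ _)]
  · -- (CAS3)
    intro i
    refine ⟨T i, ?_⟩
    ext ⟨a, b⟩
    simp only [Set.mem_preimage, Set.mem_singleton_iff, Prod.swap_prod_mk]
    constructor
    · intro h
      rw [← hTR a b, h, hTinv]
    · intro h
      rw [← h, ← hTR a b, hTinv]
  · -- commutativity
    rintro ⟨hcomm, hμIT, hanti⟩
    have hMP : MeasurePreserving T μI μI := ⟨hTcont.measurable, hμIT⟩
    let e : I ≃ᵐ I :=
      Homeomorph.toMeasurableEquiv ⟨⟨T, T, hTinv, hTinv⟩, hTcont, hTcont⟩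
    have hME : MeasurableEmbedding T := e.measurableEmbedding
    have lemB : ∀ (x z : X) (f g : C(I, ℂ)),
        ∫ y, g (R (x, y)) * f (R (y, z)) ∂μ
          = ∫ y, f (R (x, y)) * g (R (y, z)) ∂μ := by
      intro x z f g
      have hmap : ∀ i : I, ∫ j, g (T j) ∂(conv (R (z, x)) i)
          = ∫ j, g j ∂(conv (R (x, z)) (T i)) := by
        intro i
        have h1 : ∫ j, g (T j) ∂(conv (R (z, x)) i)
            = ∫ j, g j ∂(Measure.map T (conv (R (z, x)) i)) :=
          (MeasureTheory.integral_map_equiv e g).symm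
        rw [h1, hanti, hTR z x, hcomm]
      rw [CF1 x z g f, CF2 x z f g]
      have hsub := hMP.integral_comp hME
        (fun i => f (T i) * ∫ j, g j ∂(conv (R (x, z)) i))
      rw [← hsub]
      refine integral_congr_ae (ae_of_all _ fun i => ?_)
      show f (T (T i)) * ∫ j, g j ∂(conv (R (x, z)) (T i))
          = f i * ∫ j, g (T j) ∂(conv (R (z, x)) i)
      rw [hTinv i, hmap i]
    have realB : ∀ (x z : X) (f g : C(I, ℝ)),
        ∫ y, f (R (x, y)) * g (R (y, z)) ∂μ
          = ∫ y, g (R (x, y)) * f (R (y, z)) ∂μ := by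
      intro x z f g
      have h0 := lemB x z (casCplx f) (casCplx g)
      simp only [casCplx_apply] at h0
      rw [castInt (fun y => R (x, y)) (fun y => R (y, z)) f g,
          castInt (fun y => R (x, y)) (fun y => R (y, z)) g f] at h0
      exact_mod_cast h0.symm
    intro W W' hW hW' x z x' z' hxz
    have hset1 : {y : X | R (x, y) ∈ W ∧ R (y, z) ∈ W'}
        = (fun y => (R (x, y), R (y, z))) ⁻¹' (W ×ˢ W') := rfl
    have hset2 : {y : X | R (x', y) ∈ W' ∧ R (y, z') ∈ W}
        = (fun y => (R (y, z'), R (x', y))) ⁻¹' (W ×ˢ W') := by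
      ext y
      exact and_comm
    rw [hset1, hset2]
    refine casEq μ _ _ (hGc x z)
      ((hRc.comp (continuous_id.prodMk continuous_const)).prodMk
        (hRc.comp (Continuous.prodMk_right x'))) ?_ (hWb hW) (hWb hW')
    intro f g _ _
    calc ∫ y, f (R (x, y)) * g (R (y, z)) ∂μ
        = ∫ y, f (R (x', y)) * g (R (y, z')) ∂μ := realA x z x' z' hxz f g
      _ = ∫ y, g (R (x', y)) * f (R (y, z')) ∂μ := realB x' z' f g
      _ = ∫ y, f (R (y, z')) * g (R (x', y)) ∂μ :=
          integral_congr_ae (ae_of_all _ fun y => mul_comm _ _)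
  · -- symmetry
    intro hT i
    ext ⟨a, b⟩
    simp only [Set.mem_preimage, Set.mem_singleton_iff, Prod.swap_prod_mk]
    constructor
    · intro h
      rw [← hTR a b, hT]
      exact h
    · intro h
      rw [← hT (R (a, b)), hTR a b]
      exact h
end
end
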